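/- arXiv:1410.6820 — 9 statements merged into one kernel-verified Lean document; each statement's English description precedes it below -/
import Mathlib

section
/- Let d ≥ 1 and n ≥ 1, and let M be any ZMod d-submodule of the discrete phase space V. Then Nat.card M * Nat.card (M^ω) = d^(2n). -/
open scoped BigOperators
open ComplexOrder

/-- The discrete phase space for `n` particles with local dimension `d`. -/
abbrev PhaseSpace (d n : ℕ) : Type := (Fin n → ZMod d) × (Fin n → ZMod d)

/-- The symplectic form on the discrete phase space. -/
def symp {d n : ℕ} (v w : PhaseSpace d n) : ZMod d :=
  ∑ i, (v.1 i * w.2 i - v.2 i * w.1 i)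

lemma symp_add_left {d n : ℕ} (a b w : PhaseSpace d n) :
    symp (a + b) w = symp a w + symp b w := by
  simp only [symp, Prod.fst_add, Prod.snd_add, Pi.add_apply, ← Finset.sum_add_distrib]
  exact Finset.sum_congr rfl fun i _ => by ring

lemma symp_smul_left {d n : ℕ} (c : ZMod d) (a w : PhaseSpace d n) :
    symp (c • a) w = c * symp a w := by
  simp only [symp, Prod.smul_fst, Prod.smul_snd, Pi.smul_apply, smul_eq_mul, Finset.mul_sum]
  exact Finset.sum_congr rfl fun i _ => by ring

/-- The symplectic complement `M^ω` of a submodule of phase space. -/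
def sympCompl {d n : ℕ} (M : Submodule (ZMod d) (PhaseSpace d n)) :
    Submodule (ZMod d) (PhaseSpace d n) where
  carrier := {v | ∀ m ∈ M, symp v m = 0}
  zero_mem' := by
    intro m _
    simp [symp]
  add_mem' := by
    intro a b ha hb m hm
    rw [Set.mem_setOf_eq] at ha hb
    show symp _ m = 0
    rw [symp_add_left, ha m hm, hb m hm, add_zero]
  smul_mem' := by
    intro c a ha m hm
    rw [Set.mem_setOf_eq] at ha
    show symp _ m = 0
    rw [symp_smul_left, ha m hm, mul_zero]

lemma symp_add_right {d n : ℕ} (v a b : PhaseSpace d n) :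
    symp v (a + b) = symp v a + symp v b := by
  simp only [symp, Prod.fst_add, Prod.snd_add, Pi.add_apply, ← Finset.sum_add_distrib]
  exact Finset.sum_congr rfl fun i _ => by ring

lemma symp_zero_right {d n : ℕ} (v : PhaseSpace d n) : symp v 0 = 0 := by simp [symp]

lemma symp_zero_left {d n : ℕ} (v : PhaseSpace d n) : symp 0 v = 0 := by simp [symp]

lemma symp_nondeg {d n : ℕ} (m : PhaseSpace d n)
    (h : ∀ v, symp v m = 0) : m = 0 := by
  have h1 : ∀ i, m.2 i = 0 := by
    intro i
    have := h (Pi.single i 1, 0)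
    simpa [symp, Pi.single_apply, Finset.sum_ite_eq] using this
  have h2 : ∀ i, m.1 i = 0 := by
    intro i
    have := h (0, Pi.single i 1)
    simpa [symp, Pi.single_apply, Finset.sum_ite_eq] using this
  ext i
  · exact h2 i
  · exact h1 i

theorem stmt1 (d n : ℕ) (hd : 1 ≤ d) (hn : 1 ≤ n)
    (M : Submodule (ZMod d) (PhaseSpace d n)) :
    Nat.card ↥M * Nat.card ↥(sympCompl M) = d ^ (2 * n) := by
  haveI : NeZero d := ⟨by omega⟩
  classical
  set ψ : AddChar (ZMod d) ℂ := ZMod.stdAddChar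
  have hψ1 : ∀ x : ZMod d, ψ x = 1 ↔ x = 0 := by
    intro x
    constructor
    · intro hx
      have := ZMod.injective_stdAddChar (N := d) (a₁ := x) (a₂ := 0)
      exact this (by rw [hx, AddChar.map_zero_eq_one])
    · rintro rfl; exact AddChar.map_zero_eq_one ψ
  -- characters
  have key : ∑ v : PhaseSpace d n, ∑ m : ↥M, ψ (symp v (m : PhaseSpace d n))
      = (Fintype.card ↥(sympCompl M) : ℂ) * (Fintype.card ↥M : ℂ) := by
    have step : ∀ v : PhaseSpace d n,
        ∑ m : ↥M, ψ (symp v (m : PhaseSpace d n))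
          = if v ∈ sympCompl M then (Fintype.card ↥M : ℂ) else 0 := by
      intro v
      let χ : AddChar ↥M ℂ :=
        { toFun := fun m => ψ (symp v (m : PhaseSpace d n))
          map_zero_eq_one' := by simp [symp_zero_right, AddChar.map_zero_eq_one]
          map_add_eq_mul' := by
            intro a b
            simp only [Submodule.coe_add, symp_add_right]
            exact AddChar.map_add_eq_mul ψ _ _ }
      have hχ : χ = 0 ↔ v ∈ sympCompl M := by
        rw [AddChar.eq_zero_iff]
        constructor
        · intro h m hm
          exact (hψ1 _).mp (h ⟨m, hm⟩)
        · intro h m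
          exact (hψ1 _).mpr (h m.1 m.2)
      have := AddChar.sum_eq_ite χ
      simp only [AddChar.coe_mk, χ] at this
      rw [this, if_congr hχ rfl rfl]
    rw [Finset.sum_congr rfl fun v _ => step v]
    rw [Finset.sum_ite, Finset.sum_const, Finset.sum_const_zero, add_zero, nsmul_eq_mul]
    congr 2
    rw [Fintype.card_subtype]
  -- other way: swap sums
  have key2 : ∑ v : PhaseSpace d n, ∑ m : ↥M, ψ (symp v (m : PhaseSpace d n))
      = (Fintype.card (PhaseSpace d n) : ℂ) := by
    rw [Finset.sum_comm]
    have step : ∀ m : ↥M,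
        ∑ v : PhaseSpace d n, ψ (symp v (m : PhaseSpace d n))
          = if (m : PhaseSpace d n) = 0 then (Fintype.card (PhaseSpace d n) : ℂ) else 0 := by
      intro m
      let χ : AddChar (PhaseSpace d n) ℂ :=
        { toFun := fun v => ψ (symp v (m : PhaseSpace d n))
          map_zero_eq_one' := by simp [symp_zero_left, AddChar.map_zero_eq_one]
          map_add_eq_mul' := by
            intro a b
            simp only [symp_add_left]
            exact AddChar.map_add_eq_mul ψ _ _ }
      have hχ : χ = 0 ↔ (m : PhaseSpace d n) = 0 := by
        rw [AddChar.eq_zero_iff]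
        constructor
        · intro h
          exact symp_nondeg _ fun v => (hψ1 _).mp (h v)
        · intro h v
          show ψ (symp v (m : PhaseSpace d n)) = 1
          rw [h, symp_zero_right]
          exact AddChar.map_zero_eq_one ψ
      have := AddChar.sum_eq_ite χ
      simp only [AddChar.coe_mk, χ] at this
      rw [this, if_congr hχ rfl rfl]
    rw [Finset.sum_congr rfl fun m _ => step m]
    have h0 : ∀ m : ↥M, ((m : PhaseSpace d n) = 0) ↔ (m = 0) := by
      intro m; exact ZeroMemClass.coe_eq_zero
    rw [Finset.sum_congr rfl fun m _ => if_congr (h0 m) rfl rfl]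
    simp
  have hcard : Fintype.card (PhaseSpace d n) = d ^ (2 * n) := by
    simp [Fintype.card_prod, Fintype.card_fun, ZMod.card, two_mul, pow_add]
  have : (Fintype.card ↥(sympCompl M) : ℂ) * (Fintype.card ↥M : ℂ)
      = (d ^ (2 * n) : ℕ) := by
    rw [← key, key2, hcard]
  have hnat : Fintype.card ↥(sympCompl M) * Fintype.card ↥M = d ^ (2 * n) := by
    exact_mod_cast this
  rw [Nat.card_eq_fintype_card, Nat.card_eq_fintype_card, mul_comm]
  exact hnat
end

section
/- Let d ≥ 1 and n ≥ 1, and let M be any ZMod d-submodule of the discrete phase space V. Then the double symplectic complement satisfies (M^ω)^ω = M. -/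
open scoped BigOperators
open ComplexOrder

/-! A finite `ZMod d`-module is a sum of cyclic groups `ZMod k` with `k ∣ d`, each of which embeds
into `ZMod d`; hence linear functionals to `ZMod d` separate the points of `V ⧸ M`. Since `ω` is
nondegenerate, a functional on `V` vanishing on `M` but not at `v ∉ M` has the form `ω(w, ·)`
for some `w ∈ M^ω`, and then `ω(v, w) ≠ 0` shows `v ∉ (M^ω)^ω`. -/

namespace ZMod

/-- Multiplication by `d / k` embeds `ZMod k` into `ZMod d`. -/
theorem exists_addMonoidHom_injective_of_dvd {k d : ℕ} (hd : d ≠ 0) (hk : k ∣ d) :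
    ∃ φ : ZMod k →+ ZMod d, Function.Injective φ := by
  obtain ⟨c, rfl⟩ := hk
  have hc : (c : ℤ) ≠ 0 := by exact_mod_cast right_ne_zero_of_mul hd
  let f : ℤ →+ ZMod (k * c) := (Int.castAddHom _).comp (AddMonoidHom.mulRight (c : ℤ))
  have f_apply (m : ℤ) : f m = 0 ↔ (k : ℤ) ∣ m := by
    simp only [f, AddMonoidHom.comp_apply, AddMonoidHom.mulRight_apply, Int.coe_castAddHom,
      ZMod.intCast_zmod_eq_zero_iff_dvd, Nat.cast_mul]
    exact mul_dvd_mul_iff_right hc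
  refine ⟨ZMod.lift k ⟨f, (f_apply k).2 dvd_rfl⟩, (ZMod.lift_injective _).2 fun m hm => ?_⟩
  exact (ZMod.intCast_zmod_eq_zero_iff_dvd m k).2 ((f_apply m).1 hm)

theorem exists_dual_apply_ne_zero {d : ℕ} [NeZero d] {N : Type*} [AddCommGroup N]
    [Module (ZMod d) N] [Finite N] {x : N} (hx : x ≠ 0) :
    ∃ φ : Module.Dual (ZMod d) N, φ x ≠ 0 := by
  classical
  obtain ⟨ι, _, m, -, ⟨e⟩⟩ := AddCommGroup.equiv_directSum_zmod_of_finite' N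
  obtain ⟨i, hi⟩ : ∃ i, e x i ≠ 0 := by
    contrapose! hx
    exact e.map_eq_zero_iff.1 (DFinsupp.ext hx)
  have hdvd : m i ∣ d := by
    have h := congrArg (fun z => e z i) (show d • e.symm (DirectSum.of _ i 1) = 0 by
      rw [← Nat.cast_smul_eq_nsmul (ZMod d), ZMod.natCast_self, zero_smul])
    rw [map_nsmul, AddEquiv.apply_symm_apply, ← map_nsmul, DirectSum.of_eq_same, map_zero,
      DirectSum.zero_apply, nsmul_eq_mul, mul_one] at h
    exact (ZMod.natCast_eq_zero_iff _ _).1 h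
  obtain ⟨ψ, hψ⟩ := exists_addMonoidHom_injective_of_dvd (NeZero.ne d) hdvd
  exact ⟨(ψ.comp ((DFinsupp.evalAddMonoidHom i).comp e.toAddMonoidHom)).toZModLinearMap d,
    fun h => hi ((injective_iff_map_eq_zero ψ).1 hψ _ h)⟩

end ZMod

section PhaseSpace

variable {d n : ℕ}

theorem symp_skew (v w : PhaseSpace d n) : -symp w v = symp v w := by
  simp only [symp, ← Finset.sum_neg_distrib]
  exact Finset.sum_congr rfl fun i _ => by ring

theorem exists_forall_symp_eq (φ : Module.Dual (ZMod d) (PhaseSpace d n)) :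
    ∃ w : PhaseSpace d n, ∀ u, symp w u = φ u := by
  let e (i : Fin n) : Fin n → ZMod d := fun j => if i = j then 1 else 0
  refine ⟨(fun i => φ (0, e i), fun i => -φ (e i, 0)), fun u => ?_⟩
  have hu : φ u = (φ ∘ₗ LinearMap.inl _ _ _) u.1 + (φ ∘ₗ LinearMap.inr _ _ _) u.2 := by
    simp [← map_add]
  rw [hu, LinearMap.pi_apply_eq_sum_univ, LinearMap.pi_apply_eq_sum_univ, ← Finset.sum_add_distrib]
  exact Finset.sum_congr rfl fun i _ => by
    simp only [LinearMap.coe_comp, LinearMap.coe_inl, LinearMap.coe_inr, Function.comp_apply,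
      smul_eq_mul, e]
    ring

theorem le_sympCompl_sympCompl (M : Submodule (ZMod d) (PhaseSpace d n)) :
    M ≤ sympCompl (sympCompl M) := fun m hm w hw => by
  rw [← symp_skew, hw m hm, neg_zero]

theorem sympCompl_sympCompl_le [NeZero d] (M : Submodule (ZMod d) (PhaseSpace d n)) :
    sympCompl (sympCompl M) ≤ M := by
  intro v hv
  by_contra hvM
  obtain ⟨φ, hφ⟩ := ZMod.exists_dual_apply_ne_zero (d := d)
    (mt (Submodule.Quotient.mk_eq_zero M).1 hvM)
  obtain ⟨w, hw⟩ := exists_forall_symp_eq (φ ∘ₗ M.mkQ)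
  have hwM : w ∈ sympCompl M := fun m hm => by
    rw [hw, LinearMap.comp_apply, M.mkQ_apply, (Submodule.Quotient.mk_eq_zero M).2 hm, map_zero]
  apply hφ
  rw [← neg_eq_zero, ← M.mkQ_apply, ← LinearMap.comp_apply, ← hw, symp_skew, hv w hwM]

end PhaseSpace

theorem stmt2_general (d n : ℕ) (hd : 1 ≤ d)
    (M : Submodule (ZMod d) (PhaseSpace d n)) :
    sympCompl (sympCompl M) = M :=
  have : NeZero d := ⟨by omega⟩
  le_antisymm (sympCompl_sympCompl_le M) (le_sympCompl_sympCompl M)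

theorem stmt2 (d n : ℕ) (hd : 1 ≤ d) (hn : 1 ≤ n)
    (M : Submodule (ZMod d) (PhaseSpace d n)) :
    sympCompl (sympCompl M) = M :=
  stmt2_general d n hd M
end

section
/- Let d ≥ 1 be odd, n ≥ 1, and let M be an isotropic submodule of the discrete phase space V. Then the canonical stabilizer state ρ(M) is Hermitian, positive semidefinite, has trace 1, and satisfies ρ(M) * ρ(M) = ((Nat.card M : ℂ) / d^n) • ρ(M); moreover Matrix.rank ρ(M) * Nat.card M = d^n. In particular ρ(M) is (Nat.card M / d^n) times an orthogonal projection of rank d^n / Nat.card M, so it is a density matrix. -/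
/-!
For odd `d`, the number `(d² + 1)/2` is an inverse of `2` modulo `d`, so both `χ` and `τ` are
values of the standard additive character `ψ` of `ZMod d`, and `W(v)` is the monomial matrix with
entries `ψ(p ⬝ x - 2⁻¹ p ⬝ q)` on the shifted diagonal `y = x - q`. The factor `2⁻¹` makes the
Weyl operators of a symplectically orthogonal pair multiply without a cocycle,
`W(v) W(w) = W(v + w)`, and gives `W(v)ᴴ = W(-v)`; orthogonality of characters gives
`tr W(v) = 0` for `v ≠ 0`.

Summing over the isotropic submodule `M`, `ρ = d⁻ⁿ ∑ W(m)` is therefore Hermitian with trace `1`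
and `ρ² = c ρ` for `c = |M| / dⁿ > 0`. Then `ρ = c⁻¹ ρᴴ ρ` is positive semidefinite, and `c⁻¹ ρ`
is idempotent, so its rank, which is that of `ρ`, equals its trace `c⁻¹`.
-/

open scoped BigOperators
open ComplexOrder

/-- The character `χ` of `ZMod d`. -/
noncomputable def chi (d : ℕ) (x : ZMod d) : ℂ :=
  Complex.exp (2 * (Real.pi : ℂ) * Complex.I * (x.val : ℂ) / (d : ℂ))

/-- The phase `τ`. -/
noncomputable def tau (d : ℕ) (R : ℤ) : ℂ :=
  Complex.exp (2 * (Real.pi : ℂ) * Complex.I * ((d : ℂ) ^ 2 + 1) * (R : ℂ) / (2 * (d : ℂ)))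

/-- The Weyl operator of a phase-space point. -/
noncomputable def weyl (d n : ℕ) (v : PhaseSpace d n) :
    Matrix (Fin n → ZMod d) (Fin n → ZMod d) ℂ :=
  Matrix.of fun x y =>
    ∏ i, tau d (-(((v.1 i).val : ℤ) * ((v.2 i).val : ℤ))) * chi d (v.1 i * x i) *
      (if y i = x i - v.2 i then (1 : ℂ) else 0)

/-- The canonical stabilizer state `ρ(M)` of an isotropic submodule (for odd `d`). -/
noncomputable def stabState (d n : ℕ) [NeZero d]
    (M : Submodule (ZMod d) (PhaseSpace d n)) :
    Matrix (Fin n → ZMod d) (Fin n → ZMod d) ℂ :=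
  (d : ℂ) ^ (-(n : ℤ)) •
    ∑ m ∈ (Set.toFinite (M : Set (PhaseSpace d n))).toFinset, weyl d n m

open Matrix ZMod

lemma AddChar.map_sum_eq_prod {A M ι : Type*} [AddCommMonoid A] [CommMonoid M]
    (ψ : AddChar A M) (s : Finset ι) (f : ι → A) :
    ψ (∑ i ∈ s, f i) = ∏ i ∈ s, ψ (f i) := by
  classical
  induction s using Finset.induction_on with
  | empty => simp
  | insert i s hi ih => rw [Finset.sum_insert hi, Finset.prod_insert hi, map_add_eq_mul, ih]

lemma AddChar.IsPrimitive.sum_dotProduct_eq_zero {R R' ι : Type*} [CommRing R] [Fintype R]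
    [DecidableEq R] [CommRing R'] [IsDomain R'] [Fintype ι] [DecidableEq ι]
    {ψ : AddChar R R'} (hψ : ψ.IsPrimitive) {p : ι → R} (hp : p ≠ 0) :
    ∑ x : ι → R, ψ (x ⬝ᵥ p) = 0 := by
  simp_rw [dotProduct, ψ.map_sum_eq_prod]
  rw [← Fintype.prod_sum (fun i t => ψ (t * p i))]
  obtain ⟨i, hi⟩ := Function.ne_iff.mp hp
  exact Finset.prod_eq_zero (Finset.mem_univ i)
    (by simp [AddChar.sum_mulShift _ hψ, show p i ≠ 0 from hi])

lemma Matrix.trace_eq_rank_of_isIdempotentElem {K ι : Type*} [Field K] [Fintype ι]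
    [DecidableEq ι] {P : Matrix ι ι K} (hP : IsIdempotentElem P) : P.trace = P.rank := by
  have hP' : IsIdempotentElem (toLin' P) := hP.map toLinAlgEquiv'
  rw [← trace_toLin'_eq, (LinearMap.IsIdempotentElem.isProj_range _ hP').trace, Matrix.rank]
  rfl

lemma Matrix.rank_mul_eq_trace_of_mul_self_eq_smul {K ι : Type*} [Field K] [Fintype ι]
    [DecidableEq ι] {A : Matrix ι ι K} {c : K} (hc : c ≠ 0) (h : A * A = c • A) :
    (A.rank : K) * c = A.trace := by
  have hP : IsIdempotentElem (c⁻¹ • A) := by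
    rw [IsIdempotentElem, smul_mul_smul_comm, h, smul_smul, mul_assoc, inv_mul_cancel₀ hc, mul_one]
  have := trace_eq_rank_of_isIdempotentElem hP
  rw [trace_smul, smul_eq_mul,
    rank_smul_of_mem_nonZeroDivisors _ (mem_nonZeroDivisors_of_ne_zero (inv_ne_zero hc))] at this
  rw [← this, mul_right_comm, inv_mul_cancel₀ hc, one_mul]

lemma Matrix.IsHermitian.posSemidef_of_mul_self_eq_smul {𝕜 ι : Type*} [RCLike 𝕜] [Fintype ι]
    {A : Matrix ι ι 𝕜} (hA : A.IsHermitian) {c : 𝕜} (hc : 0 < c) (h : A * A = c • A) :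
    A.PosSemidef := by
  have hA_eq : A = c⁻¹ • (Aᴴ * A) := by
    rw [hA.eq, h, smul_smul, inv_mul_cancel₀ hc.ne', one_smul]
  rw [hA_eq]
  exact (posSemidef_conjTranspose_mul_self A).smul (inv_nonneg.mpr hc.le)

section Phases

variable {d : ℕ}

-- For odd `d`, a natural-number representative of `2⁻¹` in `ZMod d`.
def sqHalf (d : ℕ) : ℕ := (d ^ 2 + 1) / 2

lemma two_mul_sqHalf (hd : Odd d) : 2 * sqHalf d = d ^ 2 + 1 :=
  Nat.two_mul_div_two_of_even hd.pow.add_one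

lemma two_mul_sqHalf_zmod (hd : Odd d) : (2 : ZMod d) * sqHalf d = 1 := by
  have h := congrArg (Nat.cast : ℕ → ZMod d) (two_mul_sqHalf hd)
  push_cast at h
  rwa [ZMod.natCast_self, zero_pow two_ne_zero, zero_add] at h

variable [NeZero d]

lemma chi_eq_stdAddChar (x : ZMod d) : chi d x = stdAddChar x := by
  rw [stdAddChar_apply, toCircle_apply, chi]

lemma tau_eq_stdAddChar (hd : Odd d) (R : ℤ) :
    tau d R = stdAddChar ((sqHalf d * R : ℤ) : ZMod d) := by
  have hsq : ((d : ℂ) ^ 2 + 1) = 2 * sqHalf d := by exact_mod_cast (two_mul_sqHalf hd).symm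
  have hd0 : (d : ℂ) ≠ 0 := NeZero.ne _
  rw [stdAddChar_coe, tau, hsq]
  congr 1
  push_cast
  field_simp

lemma star_stdAddChar (a : ZMod d) : star (stdAddChar a) = stdAddChar (-a) := by
  rw [stdAddChar_apply, stdAddChar_apply, AddChar.map_neg_eq_inv, Circle.coe_inv_eq_conj]
  rfl

end Phases

section Weyl

variable {d n : ℕ}

lemma symp_eq_dotProduct (v w : PhaseSpace d n) : symp v w = v.1 ⬝ᵥ w.2 - v.2 ⬝ᵥ w.1 := by
  simp only [symp, dotProduct, Finset.sum_sub_distrib]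

def weylPhase (v : PhaseSpace d n) (x : Fin n → ZMod d) : ZMod d :=
  v.1 ⬝ᵥ x - sqHalf d * (v.1 ⬝ᵥ v.2)

lemma weylPhase_add (hd : Odd d) {v w : PhaseSpace d n} (hvw : symp v w = 0)
    (x : Fin n → ZMod d) :
    weylPhase v x + weylPhase w (x - v.2) = weylPhase (v + w) x := by
  rw [symp_eq_dotProduct, sub_eq_zero] at hvw
  simp only [weylPhase, Prod.fst_add, Prod.snd_add, add_dotProduct, dotProduct_add,
    dotProduct_sub]
  rw [dotProduct_comm w.1 v.2]
  linear_combination (sqHalf d : ZMod d) * hvw + (v.2 ⬝ᵥ w.1) * two_mul_sqHalf_zmod hd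

lemma weylPhase_neg (hd : Odd d) (v : PhaseSpace d n) (x : Fin n → ZMod d) :
    weylPhase (-v) x = -weylPhase v (x + v.2) := by
  simp only [weylPhase, Prod.fst_neg, Prod.snd_neg, neg_dotProduct, dotProduct_neg,
    dotProduct_add]
  linear_combination -(v.1 ⬝ᵥ v.2) * two_mul_sqHalf_zmod hd

variable [NeZero d]

lemma weyl_apply (hd : Odd d) (v : PhaseSpace d n) (x y : Fin n → ZMod d) :
    weyl d n v x y = stdAddChar (weylPhase v x) * if y = x - v.2 then 1 else 0 := by
  have hentry : ∀ i, tau d (-(((v.1 i).val : ℤ) * ((v.2 i).val : ℤ))) * chi d (v.1 i * x i)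
      = stdAddChar (v.1 i * x i - (sqHalf d : ZMod d) * (v.1 i * v.2 i)) := by
    intro i
    rw [tau_eq_stdAddChar hd, chi_eq_stdAddChar, ← AddChar.map_add_eq_mul]
    congr 1
    push_cast [ZMod.natCast_val, ZMod.cast_id]
    ring
  simp only [weyl, of_apply, hentry]
  rw [Finset.prod_mul_distrib, ← AddChar.map_sum_eq_prod, Fintype.prod_boole,
    Finset.sum_sub_distrib, ← Finset.mul_sum]
  simp only [← funext_iff, Pi.sub_def]
  rfl

lemma weyl_mul_weyl (hd : Odd d) {v w : PhaseSpace d n} (hvw : symp v w = 0) :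
    weyl d n v * weyl d n w = weyl d n (v + w) := by
  ext x y
  rw [mul_apply, Finset.sum_eq_single (x - v.2)]
  · simp only [weyl_apply hd, if_pos, mul_one, Prod.snd_add, sub_sub]
    rw [mul_left_comm, ← mul_assoc, ← AddChar.map_add_eq_mul, add_comm, weylPhase_add hd hvw]
  · intro z _ hz
    rw [weyl_apply hd v, if_neg hz, mul_zero, zero_mul]
  · exact fun h => absurd (Finset.mem_univ _) h

lemma conjTranspose_weyl (hd : Odd d) (v : PhaseSpace d n) :
    (weyl d n v)ᴴ = weyl d n (-v) := by
  ext x y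
  rw [conjTranspose_apply, weyl_apply hd, weyl_apply hd, star_mul', star_stdAddChar,
    Prod.snd_neg, sub_neg_eq_add]
  by_cases hy : y = x + v.2
  · subst hy
    simp [weylPhase_neg hd]
  · have hx : x ≠ y - v.2 := fun hx => hy (by rw [hx, sub_add_cancel])
    simp [hx, hy]

lemma weyl_zero (hd : Odd d) : weyl d n 0 = 1 := by
  ext x y
  simp [weyl_apply hd, weylPhase, one_apply, eq_comm]

lemma trace_weyl_of_ne_zero (hd : Odd d) {v : PhaseSpace d n} (hv : v ≠ 0) :
    (weyl d n v).trace = 0 := by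
  by_cases hq : v.2 = 0
  · have hp : v.1 ≠ 0 := fun hp => hv (Prod.ext hp hq)
    have hdiag : ∀ x, weyl d n v x x = stdAddChar (x ⬝ᵥ v.1) := fun x => by
      rw [weyl_apply hd, if_pos (by rw [hq, sub_zero]), mul_one, weylPhase, hq, dotProduct_zero,
        mul_zero, sub_zero, dotProduct_comm]
    simp only [trace, diag_apply, hdiag]
    exact (isPrimitive_stdAddChar d).sum_dotProduct_eq_zero hp
  · refine Finset.sum_eq_zero fun x _ => ?_
    have hx : x ≠ x - v.2 := fun hx => hq (sub_eq_self.mp hx.symm)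
    rw [diag_apply, weyl_apply hd, if_neg hx, mul_zero]

end Weyl

section StabilizerState

variable {d n : ℕ} [NeZero d] (M : Submodule (ZMod d) (PhaseSpace d n)) [Fintype M]

lemma stabState_eq_smul_sum : stabState d n M = ((d : ℂ) ^ n)⁻¹ • ∑ m : M, weyl d n m := by
  rw [stabState, _root_.zpow_neg, zpow_natCast,
    Finset.sum_subtype _ (fun _ => Set.Finite.mem_toFinset _)]
  rfl

lemma isHermitian_stabState (hd : Odd d) : (stabState d n M).IsHermitian := by
  rw [IsHermitian, stabState_eq_smul_sum, conjTranspose_smul, conjTranspose_sum]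
  congr 1
  · simp [star_inv₀]
  · simp only [conjTranspose_weyl hd]
    exact Equiv.sum_comp (Equiv.neg M) (fun m : M => weyl d n m)

lemma stabState_mul_self (hd : Odd d) (hM : M ≤ sympCompl M) :
    stabState d n M * stabState d n M
      = ((Nat.card M : ℂ) / (d : ℂ) ^ n) • stabState d n M := by
  have hsum : (∑ m : M, weyl d n m) * ∑ m : M, weyl d n m
      = Nat.card M • ∑ m : M, weyl d n m := by
    rw [Finset.sum_mul_sum, Nat.card_eq_fintype_card, ← Finset.card_univ, ← Finset.sum_const]
    refine Finset.sum_congr rfl fun m _ => ?_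
    simp only [fun m' : M => weyl_mul_weyl hd (hM m.2 m' m'.2)]
    exact Equiv.sum_comp (Equiv.addLeft m) (fun m' : M => weyl d n m')
  rw [stabState_eq_smul_sum, smul_mul_smul_comm, hsum, ← Nat.cast_smul_eq_nsmul ℂ, smul_smul,
    smul_smul]
  congr 1
  field_simp

lemma trace_stabState (hd : Odd d) : (stabState d n M).trace = 1 := by
  have hd0 : (d : ℂ) ^ n ≠ 0 := pow_ne_zero _ (NeZero.ne _)
  rw [stabState_eq_smul_sum, trace_smul, trace_sum, Fintype.sum_eq_single 0
    (fun m hm => trace_weyl_of_ne_zero hd (by simpa using hm))]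
  simp [weyl_zero hd, ZMod.card, hd0]

end StabilizerState

theorem stmt4_general (d n : ℕ) [NeZero d] (hd : Odd d)
    (M : Submodule (ZMod d) (PhaseSpace d n)) (hM : M ≤ sympCompl M) :
    (stabState d n M).IsHermitian ∧
    (stabState d n M).PosSemidef ∧
    (stabState d n M).trace = 1 ∧
    stabState d n M * stabState d n M
      = ((Nat.card ↥M : ℂ) / (d : ℂ) ^ n) • stabState d n M ∧
    (stabState d n M).rank * Nat.card ↥M = d ^ n := by
  have := Fintype.ofFinite M
  have hH := isHermitian_stabState M hd
  have hsq := stabState_mul_self M hd hM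
  have htr := trace_stabState M hd
  have hc : (0 : ℂ) < (Nat.card M : ℂ) / d ^ n :=
    div_pos (Nat.cast_pos.mpr Nat.card_pos) (pow_pos (Nat.cast_pos.mpr (Nat.pos_of_neZero d)) n)
  refine ⟨hH, hH.posSemidef_of_mul_self_eq_smul hc hsq, htr, hsq, ?_⟩
  have hrank := rank_mul_eq_trace_of_mul_self_eq_smul hc.ne' hsq
  rw [htr, mul_div_assoc', div_eq_one_iff_eq (pow_ne_zero _ (NeZero.ne _))] at hrank
  exact_mod_cast hrank

theorem stmt4 (d n : ℕ) [NeZero d] (hd : Odd d) (hn : 1 ≤ n)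
    (M : Submodule (ZMod d) (PhaseSpace d n)) (hM : M ≤ sympCompl M) :
    (stabState d n M).IsHermitian ∧
    (stabState d n M).PosSemidef ∧
    (stabState d n M).trace = 1 ∧
    stabState d n M * stabState d n M
      = ((Nat.card ↥M : ℂ) / (d : ℂ) ^ n) • stabState d n M ∧
    (stabState d n M).rank * Nat.card ↥M = d ^ n :=
  stmt4_general d n hd M hM
end

section
/- Let d ≥ 1 be odd, n ≥ 1, M an isotropic submodule of the discrete phase space V, and I a Finset of Fin n. Then the reduced density matrix of the canonical stabilizer state ρ(M) on the sites in I equals the canonical stabilizer state of the restriction of M: the partial trace of ρ(M) over the sites outside I equals (d : ℂ)^(-I.card) • ∑_{m ∈ M ⊓ V_I} W_I(m), where for m = (p,q) ∈ V_I the Weyl operator W_I(m) on Matrix ((i : ↥I) → ZMod d) ((i : ↥I) → ZMod d) ℂ is given by the same product formula as W(m) but with the product taken only over i ∈ I. -/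
open scoped BigOperators
open ComplexOrder

/-- The submodule `V_I` of phase-space vectors supported on the coordinates in `I`. -/
def coordSub (d n : ℕ) (I : Set (Fin n)) : Submodule (ZMod d) (PhaseSpace d n) where
  carrier := {v | ∀ i ∉ I, v.1 i = 0 ∧ v.2 i = 0}
  zero_mem' := by
    intro i _
    simp
  add_mem' := by
    intro a b ha hb i hi
    obtain ⟨ha1, ha2⟩ := ha i hi
    obtain ⟨hb1, hb2⟩ := hb i hi
    constructor
    · simp [Prod.fst_add, Pi.add_apply, ha1, hb1]
    · simp [Prod.snd_add, Pi.add_apply, ha2, hb2]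
  smul_mem' := by
    intro c a ha i hi
    obtain ⟨h1, h2⟩ := ha i hi
    constructor
    · simp [Prod.smul_fst, Pi.smul_apply, h1]
    · simp [Prod.smul_snd, Pi.smul_apply, h2]

/-- Glue a tuple indexed by `I` with a tuple indexed by `Iᶜ` to a full tuple. -/
def glue {ι : Type*} {α : ι → Type*} [Fintype ι] [DecidableEq ι] (I : Finset ι)
    (x : (i : {j // j ∈ I}) → α i.1) (z : (i : {j // j ∈ Iᶜ}) → α i.1) :
    (i : ι) → α i :=
  fun i => if h : i ∈ I then x ⟨i, h⟩ else z ⟨i, Finset.mem_compl.mpr h⟩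

/-- The reduced density matrix on the sites in `I`: the partial trace over the
complementary factors. -/
noncomputable def ptrace {ι : Type*} {α : ι → Type*} [Fintype ι] [DecidableEq ι]
    [∀ i, Fintype (α i)] (I : Finset ι)
    (ρ : Matrix ((i : ι) → α i) ((i : ι) → α i) ℂ) :
    Matrix ((i : {j // j ∈ I}) → α i.1) ((i : {j // j ∈ I}) → α i.1) ℂ :=
  Matrix.of fun x y => ∑ z : (i : {j // j ∈ Iᶜ}) → α i.1, ρ (glue I x z) (glue I y z)

/-- The Weyl operator on the sites in `I`: as `weyl`, but with the product taken
only over `i ∈ I`. -/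
noncomputable def weylSub (d n : ℕ) (I : Finset (Fin n)) (v : PhaseSpace d n) :
    Matrix ((i : {j // j ∈ I}) → ZMod d) ((i : {j // j ∈ I}) → ZMod d) ℂ :=
  Matrix.of fun x y =>
    ∏ i : {j // j ∈ I},
      tau d (-(((v.1 i.1).val : ℤ) * ((v.2 i.1).val : ℤ))) * chi d (v.1 i.1 * x i) *
        (if y i = x i - v.2 i.1 then (1 : ℂ) else 0)


section AuxStmt5

lemma pow_mod_eq' {ζ : ℂ} {d : ℕ} (h : ζ ^ d = 1) (a : ℕ) : ζ ^ a = ζ ^ (a % d) := by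
  conv_lhs => rw [← Nat.div_add_mod a d]
  rw [pow_add, pow_mul, h, one_pow, one_mul]

lemma chi_eq_pow (d : ℕ) [NeZero d] (x : ZMod d) :
    chi d x = Complex.exp (2 * (Real.pi : ℂ) * Complex.I / d) ^ x.val := by
  rw [chi, ← Complex.exp_nat_mul]
  ring_nf

lemma zeta_pow_d (d : ℕ) [NeZero d] :
    Complex.exp (2 * (Real.pi : ℂ) * Complex.I / d) ^ d = 1 := by
  rw [← Complex.exp_nat_mul]
  have hd : (d : ℂ) ≠ 0 := Nat.cast_ne_zero.mpr (NeZero.ne d)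
  rw [show (d : ℂ) * (2 * (Real.pi : ℂ) * Complex.I / d) = 2 * Real.pi * Complex.I by
    field_simp]
  exact Complex.exp_two_pi_mul_I

lemma sum_chi (d : ℕ) [NeZero d] (p : ZMod d) :
    ∑ t : ZMod d, chi d (p * t) = if p = 0 then (d : ℂ) else 0 := by
  set ζ := Complex.exp (2 * (Real.pi : ℂ) * Complex.I / d) with hζ
  have hζd : ζ ^ d = 1 := zeta_pow_d d
  have hprim : IsPrimitiveRoot ζ d := Complex.isPrimitiveRoot_exp d (NeZero.ne d)
  have h1 : ∀ t : ZMod d, chi d (p * t) = (ζ ^ p.val) ^ t.val := by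
    intro t
    rw [chi_eq_pow, ← pow_mul, pow_mod_eq' hζd (p.val * t.val), ZMod.val_mul]
  simp only [h1]
  have h2 : ∑ t : ZMod d, (ζ ^ p.val) ^ t.val = ∑ k ∈ Finset.range d, (ζ ^ p.val) ^ k := by
    refine Finset.sum_nbij' (fun t => t.val) (fun k => (k : ZMod d)) ?_ ?_ ?_ ?_ ?_
    · intro a _; exact Finset.mem_range.mpr (ZMod.val_lt a)
    · intro a _; exact Finset.mem_univ _
    · intro a _; exact ZMod.natCast_rightInverse a
    · intro a ha; exact ZMod.val_cast_of_lt (Finset.mem_range.mp ha)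
    · intro a _; rfl
  rw [h2]
  by_cases hp : p = 0
  · simp [hp, ZMod.val_zero]
  · have hw : ζ ^ p.val ≠ 1 := by
      intro h
      have hdvd := (hprim.pow_eq_one_iff_dvd p.val).mp h
      have hlt : p.val < d := ZMod.val_lt p
      exact hp ((ZMod.val_eq_zero p).mp (Nat.eq_zero_of_dvd_of_lt hdvd hlt))
    rw [if_neg hp, geom_sum_eq hw]
    rw [← pow_mul, mul_comm, pow_mul, hζd, one_pow, sub_self, zero_div]

lemma tau_zero (d : ℕ) [NeZero d] : tau d 0 = 1 := by
  simp [tau]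

lemma single_sum (d : ℕ) [NeZero d] (p q : ZMod d) :
    ∑ t : ZMod d, tau d (-((p.val : ℤ) * (q.val : ℤ))) * chi d (p * t) *
        (if t = t - q then (1 : ℂ) else 0)
      = if p = 0 ∧ q = 0 then (d : ℂ) else 0 := by
  by_cases hq : q = 0
  · subst hq
    simp only [sub_zero, ZMod.val_zero, Nat.cast_zero, mul_zero, neg_zero,
      tau_zero, one_mul, if_pos rfl, if_true, mul_one, and_true]
    rw [sum_chi]
  · have hzero : ∀ t ∈ (Finset.univ : Finset (ZMod d)),
        tau d (-((p.val : ℤ) * (q.val : ℤ))) * chi d (p * t) *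
          (if t = t - q then (1 : ℂ) else 0) = 0 := by
      intro t _
      have hcond : ¬ (t = t - q) := fun h => hq (sub_eq_self.mp h.symm)
      rw [if_neg hcond, mul_zero]
    rw [Finset.sum_eq_zero hzero, if_neg (by tauto)]

lemma prod_ite_all {ι : Type*} [Fintype ι] (P : ι → Prop) [DecidablePred P] (c : ℂ) :
    ∏ i, (if P i then c else (0 : ℂ)) = if ∀ i, P i then c ^ Fintype.card ι else 0 := by
  by_cases h : ∀ i, P i
  · rw [if_pos h, Finset.prod_congr rfl (fun i _ => if_pos (h i)), Finset.prod_const,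
      Finset.card_univ]
  · rw [if_neg h]
    push_neg at h
    obtain ⟨i, hi⟩ := h
    exact Finset.prod_eq_zero (Finset.mem_univ i) (if_neg hi)

lemma glue_mem {ι : Type*} {α : ι → Type*} [Fintype ι] [DecidableEq ι] (I : Finset ι)
    (x : (i : {j // j ∈ I}) → α i.1) (z : (i : {j // j ∈ Iᶜ}) → α i.1)
    (i : {j // j ∈ I}) : glue I x z i.1 = x i := by
  simp [glue, i.2]

lemma glue_not_mem {ι : Type*} {α : ι → Type*} [Fintype ι] [DecidableEq ι] (I : Finset ι)
    (x : (i : {j // j ∈ I}) → α i.1) (z : (i : {j // j ∈ Iᶜ}) → α i.1)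
    (i : {j // j ∈ Iᶜ}) : glue I x z i.1 = z i := by
  have hi : i.1 ∉ I := Finset.mem_compl.mp i.2
  simp [glue, hi]

lemma key_sum (d n : ℕ) [NeZero d] (I : Finset (Fin n)) (m : PhaseSpace d n)
    (x y : (i : {j // j ∈ I}) → ZMod d) :
    ∑ z : (i : {j // j ∈ Iᶜ}) → ZMod d, weyl d n m (glue I x z) (glue I y z)
      = (if ∀ i : {j // j ∈ Iᶜ}, m.1 i.1 = 0 ∧ m.2 i.1 = 0
          then (d : ℂ) ^ (Iᶜ.card) else 0) * weylSub d n I m x y := by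
  classical
  have split : ∀ z : (i : {j // j ∈ Iᶜ}) → ZMod d,
      weyl d n m (glue I x z) (glue I y z)
        = weylSub d n I m x y *
          ∏ i : {j // j ∈ Iᶜ},
            (tau d (-(((m.1 i.1).val : ℤ) * ((m.2 i.1).val : ℤ))) * chi d (m.1 i.1 * z i) *
              (if z i = z i - m.2 i.1 then (1 : ℂ) else 0)) := by
    intro z
    rw [weyl, Matrix.of_apply, ← Finset.prod_mul_prod_compl I]
    congr 1
    · rw [weylSub, Matrix.of_apply, ← Finset.prod_coe_sort]
      refine Finset.prod_congr rfl ?_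
      intro i _
      rw [glue_mem, glue_mem]
    · rw [← Finset.prod_coe_sort Iᶜ]
      refine Finset.prod_congr rfl ?_
      intro i _
      rw [glue_not_mem, glue_not_mem]
  simp only [split]
  rw [← Finset.mul_sum, mul_comm]
  congr 1
  rw [← Fintype.prod_sum fun (i : {j // j ∈ Iᶜ}) (t : ZMod d) =>
    (tau d (-(((m.1 i.1).val : ℤ) * ((m.2 i.1).val : ℤ))) * chi d (m.1 i.1 * t) *
      (if t = t - m.2 i.1 then (1 : ℂ) else 0))]
  rw [Finset.prod_congr rfl (fun i _ => single_sum d (m.1 i.1) (m.2 i.1))]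
  rw [prod_ite_all (fun i : {j // j ∈ Iᶜ} => m.1 i.1 = 0 ∧ m.2 i.1 = 0) (d : ℂ)]
  rw [Fintype.card_coe]

end AuxStmt5

theorem stmt5 (d n : ℕ) [NeZero d] (hd : Odd d) (hn : 1 ≤ n)
    (M : Submodule (ZMod d) (PhaseSpace d n)) (hM : M ≤ sympCompl M)
    (I : Finset (Fin n)) :
    ptrace I (stabState d n M)
      = (d : ℂ) ^ (-(I.card : ℤ)) •
        ∑ m ∈ (Set.toFinite ((M ⊓ coordSub d n ↑I : Submodule (ZMod d) (PhaseSpace d n)) :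
            Set (PhaseSpace d n))).toFinset,
          weylSub d n I m := by
  classical
  have hd0 : (d : ℂ) ≠ 0 := Nat.cast_ne_zero.mpr (NeZero.ne d)
  ext x y
  have lhsE : ∀ (a b : Fin n → ZMod d), stabState d n M a b
      = (d : ℂ) ^ (-(n : ℤ)) *
        ∑ m ∈ (Set.toFinite (M : Set (PhaseSpace d n))).toFinset, weyl d n m a b := by
    intro a b
    simp [stabState, Matrix.smul_apply, Matrix.sum_apply]
  have rhsE : ((d : ℂ) ^ (-(I.card : ℤ)) •
      ∑ m ∈ (Set.toFinite ((M ⊓ coordSub d n ↑I : Submodule (ZMod d) (PhaseSpace d n)) :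
          Set (PhaseSpace d n))).toFinset, weylSub d n I m) x y
      = (d : ℂ) ^ (-(I.card : ℤ)) *
        ∑ m ∈ (Set.toFinite ((M ⊓ coordSub d n ↑I : Submodule (ZMod d) (PhaseSpace d n)) :
          Set (PhaseSpace d n))).toFinset, weylSub d n I m x y := by
    simp [Matrix.smul_apply, Matrix.sum_apply]
  rw [rhsE]
  simp only [ptrace, Matrix.of_apply, lhsE]
  rw [← Finset.mul_sum, Finset.sum_comm]
  simp only [key_sum d n I _ x y]
  have hscal : (d : ℂ) ^ (-(n : ℤ)) * (d : ℂ) ^ (Iᶜ.card) = (d : ℂ) ^ (-(I.card : ℤ)) := by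
    rw [← zpow_natCast (d : ℂ) Iᶜ.card, ← zpow_add₀ hd0]
    congr 1
    have h1 : Iᶜ.card = Fintype.card (Fin n) - I.card := Finset.card_compl I
    have h2 : I.card ≤ Fintype.card (Fin n) := Finset.card_le_univ I
    rw [Fintype.card_fin] at h1 h2
    omega
  have hfilter :
      (Set.toFinite (M : Set (PhaseSpace d n))).toFinset.filter
          (fun m => ∀ i : {j // j ∈ Iᶜ}, m.1 i.1 = 0 ∧ m.2 i.1 = 0)
        = (Set.toFinite ((M ⊓ coordSub d n ↑I : Submodule (ZMod d) (PhaseSpace d n)) :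
            Set (PhaseSpace d n))).toFinset := by
    ext a
    simp only [Finset.mem_filter, Set.Finite.mem_toFinset, SetLike.mem_coe,
      Submodule.mem_inf]
    constructor
    · rintro ⟨hMa, hcond⟩
      refine ⟨hMa, ?_⟩
      intro i hi
      exact hcond ⟨i, Finset.mem_compl.mpr hi⟩
    · rintro ⟨hMa, hcond⟩
      refine ⟨hMa, ?_⟩
      intro i
      exact hcond i.1 (Finset.mem_compl.mp i.2)
  simp only [ite_mul, zero_mul]
  rw [← Finset.sum_filter, hfilter, ← Finset.mul_sum, ← mul_assoc, hscal]
end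

section
/- Compatibility of two marginals with a global pure state: Let a, b ≥ 1 and let ρ₁ : Matrix (Fin a) (Fin a) ℂ and ρ₂ : Matrix (Fin b) (Fin b) ℂ be density matrices. Then the following are equivalent: (i) there exists a unit vector ψ : Fin a × Fin b → ℂ (with ∑ over (i,j) of ‖ψ (i,j)‖^2 = 1) such that ρ₁ i i' = ∑ j, ψ (i,j) * conj (ψ (i',j)) and ρ₂ j j' = ∑ i, ψ (i,j) * conj (ψ (i,j')); (ii) X^b * Matrix.charpoly ρ₁ = X^a * Matrix.charpoly ρ₂ in ℂ[X], i.e. ρ₁ and ρ₂ have the same nonzero eigenvalues with the same multiplicities. -/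
/-!
Writing `ψ` as an `a × b` matrix `M`, the two conditions say `ρ₁ = M * Mᴴ` and `ρ₂ᵀ = Mᴴ * M`,
and `M * Mᴴ`, `Mᴴ * M` always have the same nonzero spectrum (`Matrix.charpoly_mul_comm'`).

Conversely, padding the eigenvalues of `ρ₁` and of `ρ₂` with zeros to families indexed by
`Fin a ⊕ Fin b` turns the charpoly identity into an equality of multisets, hence a permutation
matching the two families. It matches every nonzero eigenvalue of `ρ₁` with an equal eigenvalue
of `ρ₂`, which yields a rectangular matrix `D` with `D * Dᴴ` and `Dᴴ * D` the two diagonalised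
marginals; conjugating by the eigenvector unitaries `U`, `V` gives `M = U * D * Vᴴ`
(a Schmidt decomposition of `ψ`).
-/

open ComplexOrder Polynomial Matrix

theorem Equiv.exists_comp_eq_of_map_univ_eq {α β γ : Type*} [Fintype α] [Fintype β]
    [DecidableEq γ] {f : α → γ} {g : β → γ}
    (h : Finset.univ.val.map f = Finset.univ.val.map g) : ∃ e : α ≃ β, ∀ a, g (e a) = f a := by
  refine ⟨Equiv.ofFiberEquiv fun c => Fintype.equivOfCardEq ?_, Equiv.ofFiberEquiv_map _⟩
  simpa [Multiset.count_map, Fintype.card_subtype, Finset.card_def, eq_comm]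
    using congrArg (Multiset.count c) h

namespace Matrix

variable {m n : Type*}

lemma mul_conjTranspose_self_apply [Fintype n] (M : Matrix m n ℂ) (i i' : m) :
    (M * Mᴴ) i i' = ∑ j, M i j * starRingEnd ℂ (M i' j) := by
  simp [mul_apply]

lemma conjTranspose_mul_self_apply [Fintype m] (M : Matrix m n ℂ) (j j' : n) :
    (Mᴴ * M) j' j = ∑ i, M i j * starRingEnd ℂ (M i j') := by
  simp [mul_apply, mul_comm]

lemma trace_mul_conjTranspose_self [Fintype m] [Fintype n] (M : Matrix m n ℂ) :
    (M * Mᴴ).trace = ((∑ p : m × n, ‖M p.1 p.2‖ ^ 2 : ℝ) : ℂ) := by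
  simp [trace, mul_conjTranspose_self_apply, Complex.mul_conj', Fintype.sum_prod_type]

variable [Fintype m] [Fintype n]

lemma IsHermitian.X_pow_mul_charpoly_eq_prod_inl [DecidableEq m] {A : Matrix m m ℂ}
    (hA : A.IsHermitian) :
    X ^ Fintype.card n * A.charpoly
      = ∏ k : m ⊕ n, (X - C ((Sum.elim hA.eigenvalues (fun _ => 0) k : ℝ) : ℂ)) := by
  simp [hA.charpoly_eq, Fintype.prod_sum_type, mul_comm]

lemma IsHermitian.X_pow_mul_charpoly_eq_prod_inr [DecidableEq n] {B : Matrix n n ℂ}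
    (hB : B.IsHermitian) :
    X ^ Fintype.card m * B.charpoly
      = ∏ k : m ⊕ n, (X - C ((Sum.elim (fun _ => 0) hB.eigenvalues k : ℝ) : ℂ)) := by
  simp [hB.charpoly_eq, Fintype.prod_sum_type]

variable [DecidableEq m] [DecidableEq n]

lemma IsHermitian.exists_equiv_eigenvalues_of_X_pow_mul_charpoly_eq {A : Matrix m m ℂ}
    {B : Matrix n n ℂ} (hA : A.IsHermitian) (hB : B.IsHermitian)
    (h : X ^ Fintype.card n * A.charpoly = X ^ Fintype.card m * B.charpoly) :
    ∃ e : m ⊕ n ≃ m ⊕ n, ∀ k,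
      Sum.elim (fun _ => 0) hB.eigenvalues (e k) = Sum.elim hA.eigenvalues (fun _ => 0) k := by
  apply Equiv.exists_comp_eq_of_map_univ_eq
  apply Multiset.map_injective Complex.ofReal_injective
  have := congrArg roots h
  rw [hA.X_pow_mul_charpoly_eq_prod_inl, hB.X_pow_mul_charpoly_eq_prod_inr, roots_prod,
    roots_prod] at this
  · simpa [Multiset.map_map] using this
  all_goals simp [Finset.prod_ne_zero_iff, X_sub_C_ne_zero]

lemma exists_mul_conjTranspose_eq_diagonal_and_conjTranspose_mul_eq_diagonal
    (d₁ : m → ℝ) (d₂ : n → ℝ) (hd₁ : 0 ≤ d₁) (e : m ⊕ n ≃ m ⊕ n)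
    (he : ∀ k, Sum.elim (fun _ => 0) d₂ (e k) = Sum.elim d₁ (fun _ => 0) k) :
    ∃ D : Matrix m n ℂ, D * Dᴴ = diagonal (RCLike.ofReal ∘ d₁) ∧
      Dᴴ * D = diagonal (RCLike.ofReal ∘ d₂) := by
  have hsq : ∀ i, (√(d₁ i) : ℂ) * (√(d₁ i) : ℂ) = d₁ i := fun i => by
    rw [← Complex.ofReal_mul, Real.mul_self_sqrt (hd₁ i)]
  -- the indices left unmatched by `e` (sent to `inl`, or hit from `inr`) carry eigenvalue `0`
  refine ⟨of fun i j => if e (.inl i) = .inr j then (√(d₁ i) : ℂ) else 0, ?_, ?_⟩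
  · ext i i'
    simp only [mul_apply, conjTranspose_apply, of_apply, diagonal_apply]
    split_ifs with hii
    · subst hii
      rcases hk : e (.inl i) with p | q
      · have hi := he (.inl i)
        simp only [hk, Sum.elim_inl] at hi
        simp [← hi]
      · simp [hsq]
    · refine Finset.sum_eq_zero fun j _ => ?_
      split_ifs with h h'
      · exact (hii (Sum.inl_injective (e.injective (h.trans h'.symm)))).elim
      all_goals simp
  · ext j j'
    simp only [mul_apply, conjTranspose_apply, of_apply, diagonal_apply]
    split_ifs with hjj
    · subst hjj
      have hj := he (e.symm (.inr j))
      rw [Equiv.apply_symm_apply, Sum.elim_inr] at hj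
      rcases hk : e.symm (.inr j) with p | q
      · simp [← e.eq_symm_apply, hk, hsq, hj]
      · simp [← e.eq_symm_apply, hk, hj]
    · refine Finset.sum_eq_zero fun i _ => ?_
      split_ifs with h h'
      · exact (hjj (Sum.inr_injective (h.symm.trans h'))).elim
      all_goals simp

theorem PosSemidef.exists_mul_conjTranspose_eq_and_conjTranspose_mul_eq {A : Matrix m m ℂ}
    {B : Matrix n n ℂ} (hA : A.PosSemidef) (hB : B.IsHermitian)
    (h : X ^ Fintype.card n * A.charpoly = X ^ Fintype.card m * B.charpoly) :
    ∃ M : Matrix m n ℂ, M * Mᴴ = A ∧ Mᴴ * M = B := by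
  obtain ⟨e, he⟩ := hA.1.exists_equiv_eigenvalues_of_X_pow_mul_charpoly_eq hB h
  obtain ⟨D, hDA, hDB⟩ := exists_mul_conjTranspose_eq_diagonal_and_conjTranspose_mul_eq_diagonal
    _ _ hA.eigenvalues_nonneg e he
  set U := (hA.1.eigenvectorUnitary : Matrix m m ℂ)
  set V := (hB.eigenvectorUnitary : Matrix n n ℂ)
  have hU : star U * U = 1 := Unitary.coe_star_mul_self _
  have hV : star V * V = 1 := Unitary.coe_star_mul_self _
  refine ⟨U * D * star V, ?_, ?_⟩
  · conv_rhs => rw [hA.1.spectral_theorem, Unitary.conjStarAlgAut_apply, ← hDA]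
    simp only [conjTranspose_mul, ← star_eq_conjTranspose, star_star, Matrix.mul_assoc]
    rw [← Matrix.mul_assoc (star V), hV, Matrix.one_mul]
  · conv_rhs => rw [hB.spectral_theorem, Unitary.conjStarAlgAut_apply, ← hDB]
    simp only [conjTranspose_mul, ← star_eq_conjTranspose, star_star, Matrix.mul_assoc]
    rw [← Matrix.mul_assoc (star U), hU, Matrix.one_mul]

end Matrix

theorem stmt9_general (a b : ℕ)
    (ρ₁ : Matrix (Fin a) (Fin a) ℂ) (ρ₂ : Matrix (Fin b) (Fin b) ℂ)
    (h₁ : ρ₁.PosSemidef) (ht₁ : ρ₁.trace = 1)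
    (h₂ : ρ₂.PosSemidef) :
    (∃ ψ : Fin a × Fin b → ℂ,
        (∑ u, ‖ψ u‖ ^ 2 = 1) ∧
        (∀ i i', ρ₁ i i' = ∑ j, ψ (i, j) * (starRingEnd ℂ) (ψ (i', j))) ∧
        (∀ j j', ρ₂ j j' = ∑ i, ψ (i, j) * (starRingEnd ℂ) (ψ (i, j')))) ↔
      Polynomial.X ^ b * ρ₁.charpoly = Polynomial.X ^ a * ρ₂.charpoly := by
  constructor
  · rintro ⟨ψ, -, hψ₁, hψ₂⟩
    set M : Matrix (Fin a) (Fin b) ℂ := of fun i j => ψ (i, j)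
    have hM₁ : M * Mᴴ = ρ₁ := by
      ext i i'; rw [mul_conjTranspose_self_apply, hψ₁]; rfl
    have hM₂ : Mᴴ * M = ρ₂ᵀ := by
      ext j' j; rw [conjTranspose_mul_self_apply, transpose_apply, hψ₂]; rfl
    simpa [hM₁, hM₂, charpoly_transpose] using charpoly_mul_comm' M Mᴴ
  · intro h
    obtain ⟨M, hM₁, hM₂⟩ := h₁.exists_mul_conjTranspose_eq_and_conjTranspose_mul_eq
      h₂.1.transpose (by simpa [charpoly_transpose] using h)
    refine ⟨fun p => M p.1 p.2, ?_, fun i i' => ?_, fun j j' => ?_⟩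
    · exact_mod_cast (trace_mul_conjTranspose_self M).symm.trans (hM₁ ▸ ht₁)
    · rw [← hM₁, mul_conjTranspose_self_apply]
    · rw [← transpose_apply ρ₂, ← hM₂, conjTranspose_mul_self_apply]

theorem stmt9 (a b : ℕ) (ha : 1 ≤ a) (hb : 1 ≤ b)
    (ρ₁ : Matrix (Fin a) (Fin a) ℂ) (ρ₂ : Matrix (Fin b) (Fin b) ℂ)
    (h₁ : ρ₁.PosSemidef) (ht₁ : ρ₁.trace = 1)
    (h₂ : ρ₂.PosSemidef) (ht₂ : ρ₂.trace = 1) :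
    (∃ ψ : Fin a × Fin b → ℂ,
        (∑ u, ‖ψ u‖ ^ 2 = 1) ∧
        (∀ i i', ρ₁ i i' = ∑ j, ψ (i, j) * (starRingEnd ℂ) (ψ (i', j))) ∧
        (∀ j j', ρ₂ j j' = ∑ i, ψ (i, j) * (starRingEnd ℂ) (ψ (i, j')))) ↔
      Polynomial.X ^ b * ρ₁.charpoly = Polynomial.X ^ a * ρ₂.charpoly :=
  stmt9_general a b ρ₁ ρ₂ h₁ ht₁ h₂
end

section
/- Polygonal inequality for tripartite mixed states: Let a, b, c ≥ 1 and let ρ be a density matrix indexed by Fin a × Fin b × Fin c. Define the one-body reduced density matrices ρ_A i i' = ∑ j k, ρ ((i,j,k),(i',j,k)), ρ_B j j' = ∑ i k, ρ ((i,j,k),(i,j',k)), and ρ_C k k' = ∑ i j, ρ ((i,j,k),(i,j,k')). Then λmax(ρ_A) + λmax(ρ_B) + λmax(ρ_C) ≤ 2 + λmax(ρ). -/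
open scoped BigOperators
open ComplexOrder

open Classical in
/-- The largest eigenvalue `λmax` of a Hermitian matrix; junk value `0` for
non-Hermitian matrices. -/
noncomputable def lmaxM {m : Type*} [Fintype m] [DecidableEq m] (H : Matrix m m ℂ) : ℝ :=
  if h : H.IsHermitian then ⨆ i, h.eigenvalues i else 0

/-- One-body reduced density matrix of a tripartite state on the first factor. -/
noncomputable def redA {a b c : ℕ}
    (ρ : Matrix (Fin a × Fin b × Fin c) (Fin a × Fin b × Fin c) ℂ) :
    Matrix (Fin a) (Fin a) ℂ :=
  Matrix.of fun i i' => ∑ j, ∑ k, ρ (i, j, k) (i', j, k)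

/-- One-body reduced density matrix of a tripartite state on the second factor. -/
noncomputable def redB {a b c : ℕ}
    (ρ : Matrix (Fin a × Fin b × Fin c) (Fin a × Fin b × Fin c) ℂ) :
    Matrix (Fin b) (Fin b) ℂ :=
  Matrix.of fun j j' => ∑ i, ∑ k, ρ (i, j, k) (i, j', k)

/-- One-body reduced density matrix of a tripartite state on the third factor. -/
noncomputable def redC {a b c : ℕ}
    (ρ : Matrix (Fin a × Fin b × Fin c) (Fin a × Fin b × Fin c) ℂ) :
    Matrix (Fin c) (Fin c) ℂ :=
  Matrix.of fun k k' => ∑ i, ∑ j, ρ (i, j, k) (i, j, k')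

/-!
Let `P, Q, R` be the rank-one projections onto top eigenvectors of `ρ_A, ρ_B, ρ_C`. Since
`(1 - P)(1 - Q)R + (1 - Q)(1 - R) + (1 - P)(1 - R) = PQR + 2 - P - Q - R` for commuting
projections, the operator `P ⊗ Q ⊗ R + 2 - P ⊗ 1 ⊗ 1 - 1 ⊗ Q ⊗ 1 - 1 ⊗ 1 ⊗ R` is positive
semidefinite. Its trace against `ρ` is `tr(ρ (P ⊗ Q ⊗ R)) + 2 - λmax(ρ_A) - λmax(ρ_B) - λmax(ρ_C)`,
and `tr(ρ (P ⊗ Q ⊗ R)) ≤ λmax(ρ)` because `P ⊗ Q ⊗ R` is again a rank-one projection.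
-/

open scoped Kronecker MatrixOrder
open Matrix

section lmaxM

variable {n : Type*} [Fintype n] [DecidableEq n] {H : Matrix n n ℂ}

lemma Matrix.IsHermitian.lmaxM_eq (hH : H.IsHermitian) : lmaxM H = ⨆ i, hH.eigenvalues i := by
  simp [lmaxM, hH]

lemma Matrix.IsHermitian.eigenvalues_le_lmaxM (hH : H.IsHermitian) (i : n) :
    hH.eigenvalues i ≤ lmaxM H :=
  hH.lmaxM_eq ▸ le_ciSup (Set.finite_range _).bddAbove i

lemma Matrix.IsHermitian.exists_mulVec_eq_lmaxM_smul [Nonempty n] (hH : H.IsHermitian) :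
    ∃ u : n → ℂ, star u ⬝ᵥ u = 1 ∧ H *ᵥ u = (lmaxM H : ℂ) • u := by
  obtain ⟨i, hi⟩ := Finite.exists_max hH.eigenvalues
  have hmax : lmaxM H = hH.eigenvalues i :=
    le_antisymm (hH.lmaxM_eq ▸ ciSup_le hi) (hH.eigenvalues_le_lmaxM i)
  refine ⟨hH.eigenvectorBasis i, ?_, ?_⟩
  · rw [dotProduct_comm, ← EuclideanSpace.inner_eq_star_dotProduct,
      inner_self_eq_norm_sq_to_K, hH.eigenvectorBasis.orthonormal.1 i]
    norm_num
  · rw [hH.mulVec_eigenvectorBasis i, hmax, RCLike.real_smul_eq_coe_smul (K := ℂ)]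
    rfl

lemma Matrix.IsHermitian.posSemidef_lmaxM_smul_one_sub (hH : H.IsHermitian) :
    ((lmaxM H : ℂ) • 1 - H).PosSemidef := by
  rw [posSemidef_iff_isHermitian_and_spectrum_nonneg]
  refine ⟨by simp [IsHermitian, conjTranspose_smul, hH.eq], ?_⟩
  rw [← Algebra.algebraMap_eq_smul_one, ← spectrum.singleton_sub_eq, hH.spectrum_eq_image_range]
  rintro _ ⟨_, rfl, _, ⟨_, ⟨i, rfl⟩, rfl⟩, rfl⟩
  simpa using hH.eigenvalues_le_lmaxM i

end lmaxM

lemma Matrix.PosSemidef.trace_mul_nonneg {𝕜 n : Type*} [RCLike 𝕜] [Fintype n]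
    {A B : Matrix n n 𝕜} (hA : A.PosSemidef) (hB : B.PosSemidef) : 0 ≤ (A * B).trace := by
  classical
  obtain ⟨C, rfl⟩ := CStarAlgebra.nonneg_iff_eq_star_mul_self.mp hB.nonneg
  rw [← mul_assoc, trace_mul_comm, star_eq_conjTranspose, ← mul_assoc]
  exact (hA.mul_mul_conjTranspose_same C).trace_nonneg

lemma Matrix.IsHermitian.trace_mul_le_lmaxM_mul_trace {n : Type*} [Fintype n] [DecidableEq n]
    {H B : Matrix n n ℂ} (hH : H.IsHermitian) (hB : B.PosSemidef) :
    (H * B).trace ≤ lmaxM H * B.trace := by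
  have := hH.posSemidef_lmaxM_smul_one_sub.trace_mul_nonneg hB
  rwa [sub_mul, trace_sub, smul_mul_assoc, one_mul, trace_smul, smul_eq_mul, sub_nonneg] at this

section vecMulVec

variable {𝕜 n : Type*} [RCLike 𝕜] [Fintype n] {u : n → 𝕜}

lemma Matrix.isStarProjection_vecMulVec_self_star (hu : star u ⬝ᵥ u = 1) :
    IsStarProjection (vecMulVec u (star u)) where
  isIdempotentElem := by rw [IsIdempotentElem, vecMulVec_mul_vecMulVec, hu, one_smul]
  isSelfAdjoint := (posSemidef_vecMulVec_self_star u).isHermitian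

lemma Matrix.trace_vecMulVec_self_star (hu : star u ⬝ᵥ u = 1) :
    (vecMulVec u (star u)).trace = 1 := by
  rw [trace_vecMulVec, dotProduct_comm, hu]

lemma Matrix.trace_mul_vecMulVec_self_star {M : Matrix n n 𝕜} {c : 𝕜} (hu : star u ⬝ᵥ u = 1)
    (hM : M *ᵥ u = c • u) : (M * vecMulVec u (star u)).trace = c := by
  rw [mul_vecMulVec, trace_vecMulVec, hM, smul_dotProduct, dotProduct_comm, hu, smul_eq_mul,
    mul_one]

end vecMulVec

lemma Matrix.IsHermitian.trace_mul_kronecker_vecMulVec_le_lmaxM {l m n : Type*} [Fintype l]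
    [Fintype m] [Fintype n] [DecidableEq l] [DecidableEq m] [DecidableEq n]
    {H : Matrix (l × m × n) (l × m × n) ℂ} (hH : H.IsHermitian) {u : l → ℂ} {v : m → ℂ}
    {w : n → ℂ} (hu : star u ⬝ᵥ u = 1) (hv : star v ⬝ᵥ v = 1) (hw : star w ⬝ᵥ w = 1) :
    (H * vecMulVec u (star u) ⊗ₖ (vecMulVec v (star v) ⊗ₖ vecMulVec w (star w))).trace ≤
      lmaxM H := by
  have := hH.trace_mul_le_lmaxM_mul_trace <| (posSemidef_vecMulVec_self_star u).kronecker <|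
    (posSemidef_vecMulVec_self_star v).kronecker (posSemidef_vecMulVec_self_star w)
  rwa [trace_kronecker, trace_kronecker, trace_vecMulVec_self_star hu,
    trace_vecMulVec_self_star hv, trace_vecMulVec_self_star hw, one_mul, one_mul, mul_one] at this

lemma Matrix.posSemidef_kronecker_polygon {𝕜 l m n : Type*} [RCLike 𝕜] [Fintype l] [Fintype m]
    [Fintype n] [DecidableEq l] [DecidableEq m] [DecidableEq n] {P : Matrix l l 𝕜}
    {Q : Matrix m m 𝕜} {R : Matrix n n 𝕜} (hP : (1 - P).PosSemidef) (hQ : (1 - Q).PosSemidef)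
    (hR : R.PosSemidef) (hR' : (1 - R).PosSemidef) :
    (P ⊗ₖ (Q ⊗ₖ R) + 2 - P ⊗ₖ (1 ⊗ₖ 1) - 1 ⊗ₖ (Q ⊗ₖ 1) - 1 ⊗ₖ (1 ⊗ₖ R)).PosSemidef := by
  have : P ⊗ₖ (Q ⊗ₖ R) + 2 - P ⊗ₖ (1 ⊗ₖ 1) - 1 ⊗ₖ (Q ⊗ₖ 1) - 1 ⊗ₖ (1 ⊗ₖ R) =
      (1 - P) ⊗ₖ ((1 - Q) ⊗ₖ R) + 1 ⊗ₖ ((1 - Q) ⊗ₖ (1 - R)) + (1 - P) ⊗ₖ (1 ⊗ₖ (1 - R)) := by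
    ext ⟨i, j, k⟩ ⟨i', j', k'⟩
    simp only [add_apply, sub_apply, kroneckerMap_apply, one_apply, ofNat_apply, Prod.mk.injEq]
    split_ifs <;> simp_all <;> ring
  rw [this]
  exact ((hP.kronecker (hQ.kronecker hR)).add (PosSemidef.one.kronecker (hQ.kronecker hR'))).add
    (hP.kronecker (PosSemidef.one.kronecker hR'))

section reduced

variable {a b c : ℕ} (ρ : Matrix (Fin a × Fin b × Fin c) (Fin a × Fin b × Fin c) ℂ)

lemma trace_mul_kronecker_one_one (X : Matrix (Fin a) (Fin a) ℂ) :
    (ρ * X ⊗ₖ (1 ⊗ₖ 1)).trace = (redA ρ * X).trace := by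
  simp only [redA, trace, diag_apply, mul_apply, kroneckerMap_apply, one_apply, of_apply, mul_ite,
    mul_one, mul_zero, Fintype.sum_prod_type, Finset.sum_ite_eq', Finset.mem_univ, if_true,
    Finset.sum_mul]
  exact Finset.sum_congr rfl fun _ _ => Finset.sum_comm_cycle

lemma trace_mul_one_kronecker_kronecker_one (Y : Matrix (Fin b) (Fin b) ℂ) :
    (ρ * 1 ⊗ₖ (Y ⊗ₖ 1)).trace = (redB ρ * Y).trace := by
  simp only [redB, trace, diag_apply, mul_apply, kroneckerMap_apply, one_apply, of_apply, mul_ite,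
    ite_mul, mul_one, one_mul, mul_zero, zero_mul, Fintype.sum_prod_type, Finset.sum_ite_eq',
    Finset.sum_ite_irrel, Finset.sum_const_zero, Finset.mem_univ, if_true, Finset.sum_mul]
  rw [Finset.sum_comm]
  exact Finset.sum_congr rfl fun _ _ => Finset.sum_comm_cycle

lemma trace_mul_one_kronecker_one_kronecker (Z : Matrix (Fin c) (Fin c) ℂ) :
    (ρ * 1 ⊗ₖ (1 ⊗ₖ Z)).trace = (redC ρ * Z).trace := by
  simp only [redC, trace, diag_apply, mul_apply, kroneckerMap_apply, one_apply, of_apply, mul_ite,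
    ite_mul, one_mul, mul_zero, zero_mul, Fintype.sum_prod_type, Finset.sum_ite_eq',
    Finset.sum_ite_irrel, Finset.sum_const_zero, Finset.mem_univ, if_true, Finset.sum_mul]
  rw [Finset.sum_comm_cycle]
  exact Finset.sum_congr rfl fun _ _ => Finset.sum_comm_cycle

variable {ρ}

lemma Matrix.IsHermitian.redA (hρ : ρ.IsHermitian) : (redA ρ).IsHermitian := by
  ext i i'
  simp [_root_.redA, star_sum, hρ.apply]

lemma Matrix.IsHermitian.redB (hρ : ρ.IsHermitian) : (redB ρ).IsHermitian := by
  ext j j'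
  simp [_root_.redB, star_sum, hρ.apply]

lemma Matrix.IsHermitian.redC (hρ : ρ.IsHermitian) : (redC ρ).IsHermitian := by
  ext k k'
  simp [_root_.redC, star_sum, hρ.apply]

end reduced

theorem stmt10 (a b c : ℕ) (ha : 1 ≤ a) (hb : 1 ≤ b) (hc : 1 ≤ c)
    (ρ : Matrix (Fin a × Fin b × Fin c) (Fin a × Fin b × Fin c) ℂ)
    (hρ : ρ.PosSemidef) (htr : ρ.trace = 1) :
    lmaxM (redA ρ) + lmaxM (redB ρ) + lmaxM (redC ρ) ≤ 2 + lmaxM ρ := by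
  have := Fin.pos_iff_nonempty.mp ha
  have := Fin.pos_iff_nonempty.mp hb
  have := Fin.pos_iff_nonempty.mp hc
  obtain ⟨u, hu, hAu⟩ := hρ.isHermitian.redA.exists_mulVec_eq_lmaxM_smul
  obtain ⟨v, hv, hBv⟩ := hρ.isHermitian.redB.exists_mulVec_eq_lmaxM_smul
  obtain ⟨w, hw, hCw⟩ := hρ.isHermitian.redC.exists_mulVec_eq_lmaxM_smul
  have hP := isStarProjection_vecMulVec_self_star hu
  have hQ := isStarProjection_vecMulVec_self_star hv
  have hR := isStarProjection_vecMulVec_self_star hw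
  have hpolygon := hρ.trace_mul_nonneg <| posSemidef_kronecker_polygon
    hP.one_sub.nonneg.posSemidef hQ.one_sub.nonneg.posSemidef hR.nonneg.posSemidef
    hR.one_sub.nonneg.posSemidef
  rw [mul_sub, mul_sub, mul_sub, mul_add, trace_sub, trace_sub, trace_sub, trace_add, mul_two,
    trace_add, htr, trace_mul_kronecker_one_one, trace_mul_one_kronecker_kronecker_one,
    trace_mul_one_kronecker_one_kronecker, trace_mul_vecMulVec_self_star hu hAu,
    trace_mul_vecMulVec_self_star hv hBv, trace_mul_vecMulVec_self_star hw hCw] at hpolygon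
  have hproduct := hρ.isHermitian.trace_mul_kronecker_vecMulVec_le_lmaxM hu hv hw
  have h1 := (Complex.le_def.mp hpolygon).1
  have h2 := (Complex.le_def.mp hproduct).1
  simp only [Complex.zero_re, Complex.sub_re, Complex.add_re, Complex.one_re, Complex.ofReal_re]
    at h1 h2
  linarith
end

section
/- With A, B, C and ψ as in the construction: (i) ψ is a unit vector, ∑ u, ‖ψ u‖^2 = 1; (ii) for every nonempty subset J of the first three tensor factors, writing S_J for the sum of those matrices among A, B, C indexed by J and ρ_J for the reduced density matrix of |ψ⟩⟨ψ| on the factors in J (partial trace over the fourth factor and all factors outside J), one has Matrix.charpoly ρ_J = X^((d+1)^(J.card) − (d+1)) * (X − (1 − (S_J).trace)) * Matrix.charpoly S_J. In particular, the nonzero eigenvalues (with multiplicity) of ρ_ABC are (1 − tr(A+B+C)) together with the eigenvalues of A+B+C, those of ρ_AB are (1 − tr(A+B)) together with the eigenvalues of A+B, those of ρ_A are (1 − tr A) together with the eigenvalues of A, and likewise for all other marginals. -/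
open scoped BigOperators
open ComplexOrder

/-- The rank-one projection `|ψ⟩⟨ψ|`. -/
def outer {m : Type*} (ψ : m → ℂ) : Matrix m m ℂ :=
  Matrix.of fun u v => ψ u * (starRingEnd ℂ) (ψ v)

/-- The positive semidefinite square root, as `Matrix.PosSemidef.sqrt` was defined. -/
noncomputable def Matrix.PosSemidef.sqrt {n : Type*} [Fintype n] [DecidableEq n]
    {A : Matrix n n ℂ} (hA : A.PosSemidef) : Matrix n n ℂ :=
  hA.1.eigenvectorUnitary.1 * Matrix.diagonal (((↑) : ℝ → ℂ) ∘ (fun x => Real.sqrt x) ∘ hA.1.eigenvalues) *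
    (star hA.1.eigenvectorUnitary : Matrix n n ℂ)

/-- The four-partite pure state `ψ` built from positive semidefinite matrices
`A`, `B`, `C`, identifying `Fin (d+1)` with `{0} ⊕ Fin d` via `Fin.succ`:
`ψ (i+1, 0, 0, l+1) = (√A) i l`, `ψ (0, j+1, 0, l+1) = (√B) j l`,
`ψ (0, 0, k+1, l+1) = (√C) k l`, `ψ (0,0,0,0) = √(1 - tr (A+B+C))`, and `0` otherwise. -/
noncomputable def purif {d : ℕ} {A B C : Matrix (Fin d) (Fin d) ℂ}
    (hA : A.PosSemidef) (hB : B.PosSemidef) (hC : C.PosSemidef)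
    (u : Fin (d + 1) × Fin (d + 1) × Fin (d + 1) × Fin (d + 1)) : ℂ :=
  if hi : u.1 = 0 then
    if hj : u.2.1 = 0 then
      if hk : u.2.2.1 = 0 then
        if _hl : u.2.2.2 = 0 then (Real.sqrt (1 - ((A + B + C).trace).re) : ℂ) else 0
      else
        if hl : u.2.2.2 = 0 then 0 else hC.sqrt (u.2.2.1.pred hk) (u.2.2.2.pred hl)
    else
      if _hk : u.2.2.1 = 0 then
        if hl : u.2.2.2 = 0 then 0 else hB.sqrt (u.2.1.pred hj) (u.2.2.2.pred hl)
      else 0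
  else
    if _hj : u.2.1 = 0 then
      if _hk : u.2.2.1 = 0 then
        if hl : u.2.2.2 = 0 then 0 else hA.sqrt (u.1.pred hi) (u.2.2.2.pred hl)
      else 0
    else 0

/-!
Read `ψ` as a tensor on `Fin 4 → Fin (d+1)` with purifying site `3`. Each nonzero amplitude of `ψ`
excites either no site, or site `3` together with exactly one site `a`, with amplitude matrix
`√M_a`. For `J ∌ 3` this forces `ρ_J = w E₀₀ + Φ Φᴴ`, where `Φ x l` is the amplitude of `x`
glued with the excitation `l` at site `3` and vacuum elsewhere, and `Φᴴ Φ = ∑_{a ∈ J} M_a = S_J`.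
So `ρ_J = V Vᴴ` for `V = [√w e₀ | Φ]`, while `Vᴴ V = diag (w, S_J)`; the two share their nonzero
spectrum, and `w = 1 - tr S_J` because `tr ρ_J = ‖ψ‖² = 1`.
-/

open Finset Polynomial Matrix

lemma sum_eq_apply_zero_add_sum_piSingle {κ M : Type*} [Fintype κ] [DecidableEq κ]
    [AddCommMonoid M] {d : ℕ} (F : (κ → Fin (d + 1)) → M)
    (hF : ∀ x a b, a ≠ b → x a ≠ 0 → x b ≠ 0 → F x = 0) :
    ∑ x, F x = F 0 + ∑ a, ∑ i : Fin d, F (Pi.single a i.succ) := by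
  let e : Option (κ × Fin d) → κ → Fin (d + 1) := fun p => p.elim 0 fun q => Pi.single q.1 q.2.succ
  have he : Function.Injective e := by
    rintro (_ | ⟨a, i⟩) (_ | ⟨b, j⟩) h
    · rfl
    · exact absurd (congrFun h b) (by simp [e, (Fin.succ_ne_zero j).symm])
    · exact absurd (congrFun h a) (by simp [e, Fin.succ_ne_zero])
    · have hab : a = b := by
        by_contra hab
        simpa [e, hab] using congrFun h a
      subst hab
      simpa [e] using congrFun h a
  rw [← Fintype.sum_of_injective e he (fun p => F (e p)) F ?_ fun _ => rfl,
    Fintype.sum_option, Fintype.sum_prod_type]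
  · rfl
  intro x hx
  by_contra hFx
  apply hx
  by_cases h0 : x = 0
  · exact ⟨none, h0.symm⟩
  obtain ⟨a, ha⟩ := Function.ne_iff.mp h0
  refine ⟨some (a, (x a).pred ha), funext fun b => ?_⟩
  by_cases hb : b = a
  · subst hb; simp [e]
  · simp only [e, Option.elim, Fin.succ_pred, Pi.single_apply, hb, if_false]
    by_contra hxb
    exact hFx (hF x b a hb (Ne.symm hxb) ha)

section PartialTrace

variable {ι : Type*} {α : ι → Type*} [Fintype ι] [DecidableEq ι] (I : Finset ι)

@[simp]
lemma glue_of_mem (x : (i : {j // j ∈ I}) → α i.1) (z : (i : {j // j ∈ Iᶜ}) → α i.1)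
    (i : {j // j ∈ I}) : glue I x z i.1 = x i := by
  simp [glue]

@[simp]
lemma glue_of_mem_compl (x : (i : {j // j ∈ I}) → α i.1) (z : (i : {j // j ∈ Iᶜ}) → α i.1)
    (i : {j // j ∈ Iᶜ}) : glue I x z i.1 = z i := by
  simp [glue, Finset.mem_compl.mp i.2]

def glueEquiv :
    ((i : {j // j ∈ I}) → α i.1) × ((i : {j // j ∈ Iᶜ}) → α i.1) ≃ ((i : ι) → α i) where
  toFun p := glue I p.1 p.2
  invFun f := (fun i => f i.1, fun i => f i.1)
  left_inv p := by ext <;> simp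
  right_inv f := by
    funext i
    by_cases hi : i ∈ I <;> simp [glue, hi]

lemma trace_ptrace [∀ i, Fintype (α i)] (ρ : Matrix ((i : ι) → α i) ((i : ι) → α i) ℂ) :
    (ptrace I ρ).trace = ρ.trace := by
  simp only [Matrix.trace, Matrix.diag, ptrace, Matrix.of_apply]
  rw [← Fintype.sum_prod_type']
  exact Fintype.sum_equiv (glueEquiv I) _ _ fun _ => rfl

end PartialTrace

lemma trace_outer {m : Type*} [Fintype m] (ψ : m → ℂ) :
    (outer ψ).trace = ((∑ u, ‖ψ u‖ ^ 2 : ℝ) : ℂ) := by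
  simp [Matrix.trace, outer, Complex.mul_conj, Complex.normSq_eq_norm_sq]

lemma Matrix.charpoly_eq_X_sub_C_mul_of_row_zero {R : Type*} [CommRing R] {n : ℕ}
    (M : Matrix (Fin (n + 1)) (Fin (n + 1)) R) (h : ∀ j : Fin n, M 0 j.succ = 0) :
    M.charpoly = (X - C (M 0 0)) * (M.submatrix Fin.succ Fin.succ).charpoly := by
  have hsub : (charmatrix M).submatrix Fin.succ Fin.succ =
      charmatrix (M.submatrix Fin.succ Fin.succ) := by
    ext i j
    by_cases hij : i = j
    · subst hij; simp [charmatrix_apply_eq]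
    · rw [submatrix_apply, charmatrix_apply_ne _ _ _ ((Fin.succ_injective _).ne hij),
        charmatrix_apply_ne _ _ _ hij, submatrix_apply]
  rw [charpoly, det_succ_row_zero, Fin.sum_univ_succ, Finset.sum_eq_zero fun j _ => by
    rw [charmatrix_apply_ne _ _ _ (Fin.succ_ne_zero j).symm, h]; simp]
  simp [charmatrix_apply_eq, hsub, charpoly]

lemma charpoly_single_add_mul_conjTranspose {m : Type*} [Fintype m] [DecidableEq m] {d : ℕ}
    (Φ : Matrix m (Fin d) ℂ) (x₀ : m)
    (hΦ : ∀ l, Φ x₀ l = 0) {w : ℝ} (hw : 0 ≤ w) :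
    X ^ (d + 1) * (single x₀ x₀ (w : ℂ) + Φ * Φᴴ).charpoly
      = X ^ Fintype.card m * ((X - C (w : ℂ)) * (Φᴴ * Φ).charpoly) := by
  let V : Matrix m (Fin (d + 1)) ℂ :=
    of fun x => Fin.cons (if x = x₀ then (Real.sqrt w : ℂ) else 0) (Φ x)
  have hVV : V * Vᴴ = single x₀ x₀ (w : ℂ) + Φ * Φᴴ := by
    ext x y
    simp only [V, mul_apply, Fin.sum_univ_succ, conjTranspose_apply, of_apply, Fin.cons_zero,
      Fin.cons_succ, Matrix.add_apply, single_apply]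
    by_cases hx : x = x₀
    · subst hx
      by_cases hy : y = x
      · subst hy
        simp [hΦ, ← Complex.ofReal_mul, Real.mul_self_sqrt hw]
      · simp [hΦ, hy, Ne.symm hy]
    · simp [hx, Ne.symm hx]
  have hrow : ∀ l : Fin d, (Vᴴ * V) 0 l.succ = 0 := by
    intro l
    simp [V, mul_apply, apply_ite (starRingEnd ℂ), ite_mul, hΦ]
  have hsub : (Vᴴ * V).submatrix Fin.succ Fin.succ = Φᴴ * Φ := by
    ext k l
    simp [V, mul_apply]
  have h00 : (Vᴴ * V) 0 0 = w := by
    simp [V, mul_apply, apply_ite (starRingEnd ℂ), ite_mul]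
    rw [← Complex.ofReal_mul, Real.mul_self_sqrt hw]
  have hcomm := charpoly_mul_comm' V Vᴴ
  rw [Fintype.card_fin] at hcomm
  rw [← hVV, hcomm, charpoly_eq_X_sub_C_mul_of_row_zero _ hrow, h00, hsub]

section StarShaped

variable {κ : Type*} [Fintype κ] [DecidableEq κ] {d : ℕ}

/-- Every nonzero amplitude of `φ` either excites no site, or excites the site `t` together with
exactly one other site. -/
structure IsStarShaped (t : κ) (φ : (κ → Fin (d + 1)) → ℂ) : Prop where
  eq_zero_of_two : ∀ f a b, a ≠ b → a ≠ t → b ≠ t → f a ≠ 0 → f b ≠ 0 → φ f = 0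
  eq_zero_of_apply_eq_zero : ∀ f, f t = 0 → f ≠ 0 → φ f = 0
  single_eq_zero : ∀ k : Fin d, φ (Pi.single t k.succ) = 0

def starArm (t : κ) (φ : (κ → Fin (d + 1)) → ℂ) (a : κ) : Matrix (Fin d) (Fin d) ℂ :=
  of fun i l => φ (Function.update (Pi.single t l.succ) a i.succ)

variable {J : Finset κ} (t : {j // j ∈ Jᶜ}) (φ : (κ → Fin (d + 1)) → ℂ)

def ptraceFactor : Matrix ({j // j ∈ J} → Fin (d + 1)) (Fin d) ℂ :=
  of fun x l => φ (glue J x (Pi.single t l.succ))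

lemma glue_zero_single (k : Fin (d + 1)) :
    glue (α := fun _ => Fin (d + 1)) J 0 (Pi.single t k) = Pi.single t.1 k := by
  funext i
  by_cases hi : i ∈ J
  · have : i ≠ t.1 := fun h => Finset.mem_compl.mp t.2 (h ▸ hi)
    simp [glue, hi, this]
  · simp [glue, hi, Pi.single_apply, Subtype.ext_iff]

lemma glue_single_single (a : {j // j ∈ J}) (v k : Fin (d + 1)) :
    glue (α := fun _ => Fin (d + 1)) J (Pi.single a v) (Pi.single t k)
      = Function.update (Pi.single t.1 k) a.1 v := by
  funext i
  by_cases hi : i ∈ J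
  · have : i ≠ t.1 := fun h => Finset.mem_compl.mp t.2 (h ▸ hi)
    simp [glue, hi, this, Pi.single_apply, Function.update_apply, Subtype.ext_iff]
  · have : i ≠ a.1 := fun h => hi (h ▸ a.2)
    simp [glue, hi, this, Pi.single_apply, Subtype.ext_iff]

variable {t φ}

lemma ptraceFactor_zero_apply (hφ : IsStarShaped t.1 φ) (l : Fin d) :
    ptraceFactor t φ 0 l = 0 := by
  simp [ptraceFactor, glue_zero_single, hφ.single_eq_zero]

lemma apply_glue_eq_zero_of_ne_zero (hφ : IsStarShaped t.1 φ) {x : {j // j ∈ J} → Fin (d + 1)}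
    (hx : x ≠ 0)
    {z : {j // j ∈ Jᶜ} → Fin (d + 1)} (hz : z ∉ univ.image fun l : Fin d => Pi.single t l.succ) :
    φ (glue J x z) = 0 := by
  obtain ⟨a, ha⟩ := Function.ne_iff.mp hx
  have hat : a.1 ≠ t.1 := fun h => Finset.mem_compl.mp t.2 (h ▸ a.2)
  by_cases hb : ∃ b, b ≠ t ∧ z b ≠ 0
  · obtain ⟨b, hbt, hb⟩ := hb
    refine hφ.eq_zero_of_two _ a.1 b.1 (fun h => Finset.mem_compl.mp b.2 (h ▸ a.2)) hat
      (fun h => hbt (Subtype.ext h)) ?_ ?_ <;> simpa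
  push Not at hb
  have hzt : z t = 0 := by
    by_contra hzt
    refine hz (Finset.mem_image.mpr ⟨(z t).pred hzt, Finset.mem_univ _, funext fun b => ?_⟩)
    by_cases hbt : b = t
    · subst hbt; simp
    · simp [hbt, hb b hbt]
  refine hφ.eq_zero_of_apply_eq_zero _ (by simpa using hzt) fun h => ha ?_
  simpa using congrFun h a.1

lemma ptrace_outer_eq_single_add_mul_conjTranspose (hφ : IsStarShaped t.1 φ) :
    ptrace J (outer φ) = single 0 0 ((∑ z, ‖φ (glue J 0 z)‖ ^ 2 : ℝ) : ℂ)
      + ptraceFactor t φ * (ptraceFactor t φ)ᴴ := by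
  set T := univ.image fun l : Fin d => Pi.single (M := fun _ => Fin (d + 1)) t l.succ
  have hT : ∀ x y, ∑ z ∈ T, φ (glue J x z) * (starRingEnd ℂ) (φ (glue J y z))
      = (ptraceFactor t φ * (ptraceFactor t φ)ᴴ) x y := by
    intro x y
    rw [Finset.sum_image fun l _ l' _ h => Fin.succ_injective _ (by simpa using congrFun h t)]
    simp [mul_apply, ptraceFactor]
  have hTc : ∀ z ∈ T, φ (glue J 0 z) = 0 := by
    intro z hz
    obtain ⟨l, -, rfl⟩ := Finset.mem_image.mp hz
    rw [glue_zero_single, hφ.single_eq_zero]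
  ext x y
  simp only [ptrace, outer, of_apply, Matrix.add_apply, single_apply]
  rw [← Finset.sum_add_sum_compl T, hT, add_comm]
  congr 1
  by_cases hx : x = 0
  · by_cases hy : y = 0
    · subst hx hy
      rw [if_pos ⟨rfl, rfl⟩, Complex.ofReal_sum]
      conv_rhs => rw [← Finset.sum_add_sum_compl T]
      rw [Finset.sum_eq_zero (s := T) fun z hz => by rw [hTc z hz]; simp, zero_add]
      refine Finset.sum_congr rfl fun z _ => ?_
      rw [Complex.mul_conj, Complex.normSq_eq_norm_sq]
    · rw [if_neg fun h => hy h.2.symm]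
      exact Finset.sum_eq_zero fun z hz => by
        rw [apply_glue_eq_zero_of_ne_zero hφ hy (Finset.mem_compl.mp hz)]; simp
  · rw [if_neg fun h => hx h.1.symm]
    exact Finset.sum_eq_zero fun z hz => by
      rw [apply_glue_eq_zero_of_ne_zero hφ hx (Finset.mem_compl.mp hz)]; simp

lemma conjTranspose_ptraceFactor_mul_self (hφ : IsStarShaped t.1 φ) :
    (ptraceFactor t φ)ᴴ * ptraceFactor t φ = ∑ a ∈ J, (starArm t.1 φ a)ᴴ * starArm t.1 φ a := by
  ext l m
  simp only [mul_apply, conjTranspose_apply, Matrix.sum_apply]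
  rw [sum_eq_apply_zero_add_sum_piSingle]
  · simp only [ptraceFactor_zero_apply hφ, star_zero, zero_mul, zero_add]
    rw [← Finset.sum_coe_sort J]
    simp [ptraceFactor, starArm, glue_single_single]
  · intro x a b hab ha hb
    have hat : ∀ c : {j // j ∈ J}, c.1 ≠ t.1 := fun c h => Finset.mem_compl.mp t.2 (h ▸ c.2)
    rw [ptraceFactor, of_apply, hφ.eq_zero_of_two _ a.1 b.1 (fun h => hab (Subtype.ext h))
      (hat a) (hat b) (by simpa using ha) (by simpa using hb), star_zero, zero_mul]

theorem charpoly_ptrace_outer (hφ : IsStarShaped t.1 φ) (hnorm : ∑ f, ‖φ f‖ ^ 2 = 1) :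
    X ^ (d + 1) * (ptrace J (outer φ)).charpoly
      = X ^ Fintype.card ({j // j ∈ J} → Fin (d + 1))
        * ((X - C (1 - (∑ a ∈ J, (starArm t.1 φ a)ᴴ * starArm t.1 φ a).trace))
          * (∑ a ∈ J, (starArm t.1 φ a)ᴴ * starArm t.1 φ a).charpoly) := by
  -- the weight of `single 0 0` is read off from `tr ρ_J = ‖φ‖² = 1`
  have htrace := congrArg Matrix.trace (ptrace_outer_eq_single_add_mul_conjTranspose hφ)
  rw [trace_ptrace, trace_outer, hnorm, Complex.ofReal_one, trace_add, trace_single_eq_same,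
    trace_mul_comm, conjTranspose_ptraceFactor_mul_self hφ] at htrace
  rw [ptrace_outer_eq_single_add_mul_conjTranspose hφ,
    charpoly_single_add_mul_conjTranspose _ 0 (ptraceFactor_zero_apply hφ) (by positivity),
    conjTranspose_ptraceFactor_mul_self hφ, htrace, add_sub_cancel_right]

end StarShaped

section Sqrt

variable {n : Type*} [Fintype n] [DecidableEq n] {M : Matrix n n ℂ}

lemma Matrix.PosSemidef.sqrt_isHermitian (hM : M.PosSemidef) : hM.sqrt.IsHermitian := by
  unfold Matrix.PosSemidef.sqrt
  simp only [IsHermitian, conjTranspose_mul, diagonal_conjTranspose, star_eq_conjTranspose,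
    conjTranspose_conjTranspose, Matrix.mul_assoc]
  congr 3
  funext i
  simp

lemma Matrix.PosSemidef.sqrt_mul_self (hM : M.PosSemidef) : hM.sqrt * hM.sqrt = M := by
  conv_rhs => rw [hM.1.spectral_theorem]
  unfold Matrix.PosSemidef.sqrt
  have hU : (star hM.1.eigenvectorUnitary : Matrix n n ℂ) * hM.1.eigenvectorUnitary.1 = 1 :=
    Unitary.coe_star_mul_self _
  simp only [Unitary.conjStarAlgAut_apply, Matrix.mul_assoc]
  rw [← Matrix.mul_assoc (star _ : Matrix n n ℂ), hU, Matrix.one_mul,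
    ← Matrix.mul_assoc (diagonal _), diagonal_mul_diagonal]
  congr 3
  ext i
  simp only [Function.comp_apply]
  rw [← Complex.ofReal_mul, Real.mul_self_sqrt (hM.eigenvalues_nonneg i)]
  rfl

lemma Matrix.PosSemidef.conjTranspose_sqrt_mul_sqrt (hM : M.PosSemidef) :
    hM.sqrtᴴ * hM.sqrt = M := by
  rw [hM.sqrt_isHermitian.eq, hM.sqrt_mul_self]

lemma Matrix.PosSemidef.sum_norm_sq_sqrt (hM : M.PosSemidef) :
    ∑ i, ∑ j, ‖hM.sqrt i j‖ ^ 2 = M.trace.re := by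
  conv_rhs => rw [← hM.conjTranspose_sqrt_mul_sqrt]
  simp only [trace, diag, mul_apply, conjTranspose_apply, Complex.re_sum]
  rw [Finset.sum_comm]
  simp [← Complex.normSq_eq_norm_sq, Complex.normSq_apply, mul_comm]

end Sqrt

lemma lmaxM_nonneg {m : Type*} [Fintype m] [DecidableEq m] {H : Matrix m m ℂ}
    (hH : H.PosSemidef) : 0 ≤ lmaxM H := by
  rw [lmaxM, dif_pos hH.1]
  exact Real.iSup_nonneg hH.eigenvalues_nonneg

section Purification

variable {d : ℕ} {A B C : Matrix (Fin d) (Fin d) ℂ}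
  (hA : A.PosSemidef) (hB : B.PosSemidef) (hC : C.PosSemidef)

lemma isStarShaped_purif :
    IsStarShaped 3 fun f : Fin 4 → Fin (d + 1) => purif hA hB hC (f 0, f 1, f 2, f 3) where
  eq_zero_of_two f a b hab ha hb hfa hfb := by
    fin_cases a <;> fin_cases b <;> simp_all [purif]
  eq_zero_of_apply_eq_zero f hf3 hf := by
    obtain ⟨i, hi⟩ := Function.ne_iff.mp hf
    fin_cases i <;> simp_all [purif]
  single_eq_zero k := by simp [purif]

lemma starArm_purif (j : Fin 3) :
    starArm 3 (fun f : Fin 4 → Fin (d + 1) => purif hA hB hC (f 0, f 1, f 2, f 3)) j.castSucc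
      = ![hA.sqrt, hB.sqrt, hC.sqrt] j := by
  fin_cases j <;> ext i l <;> simp [starArm, purif]

lemma sum_norm_sq_purif (hr : 0 ≤ 1 - ((A + B + C).trace).re) :
    ∑ u, ‖purif hA hB hC u‖ ^ 2 = 1 := by
  have key : ∑ u, ‖purif hA hB hC u‖ ^ 2
      = Real.sqrt (1 - ((A + B + C).trace).re) ^ 2 + (∑ k, ∑ l, ‖hC.sqrt k l‖ ^ 2
        + (∑ j, ∑ l, ‖hB.sqrt j l‖ ^ 2 + ∑ i, ∑ l, ‖hA.sqrt i l‖ ^ 2)) := by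
    simp only [Fintype.sum_prod_type, Fin.sum_univ_succ, purif, Fin.succ_ne_zero]
    simp
    ring
  rw [key, Real.sq_sqrt hr, hA.sum_norm_sq_sqrt, hB.sum_norm_sq_sqrt, hC.sum_norm_sq_sqrt]
  simp [trace_add]
  ring

lemma sum_conjTranspose_starArm_mul_starArm_purif (J : Finset (Fin 3)) :
    ∑ a ∈ J.image Fin.castSucc,
      (starArm 3 (fun f : Fin 4 → Fin (d + 1) => purif hA hB hC (f 0, f 1, f 2, f 3)) a)ᴴ
        * starArm 3 (fun f : Fin 4 → Fin (d + 1) => purif hA hB hC (f 0, f 1, f 2, f 3)) a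
      = ∑ j ∈ J, ![A, B, C] j := by
  rw [Finset.sum_image fun _ _ _ _ h => Fin.castSucc_injective 3 h]
  refine Finset.sum_congr rfl fun j _ => ?_
  rw [starArm_purif]
  fin_cases j
  exacts [hA.conjTranspose_sqrt_mul_sqrt, hB.conjTranspose_sqrt_mul_sqrt,
    hC.conjTranspose_sqrt_mul_sqrt]

end Purification

lemma sum_comp_fin_four {α M : Type*} [Fintype α] [AddCommMonoid M] (g : α × α × α × α → M) :
    ∑ f : Fin 4 → α, g (f 0, f 1, f 2, f 3) = ∑ u, g u :=
  Fintype.sum_equiv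
    { toFun f := (f 0, f 1, f 2, f 3)
      invFun u := ![u.1, u.2.1, u.2.2.1, u.2.2.2]
      left_inv f := by ext i; fin_cases i <;> rfl
      right_inv _ := rfl } _ _ fun _ => rfl

open Polynomial in
theorem stmt11_general (d : ℕ)
    (A B C : Matrix (Fin d) (Fin d) ℂ)
    (hA : A.PosSemidef) (hB : B.PosSemidef) (hC : C.PosSemidef)
    (hbound : lmaxM (A + B + C) ≤ 1 - ((A + B + C).trace).re) :
    (∑ u, ‖purif hA hB hC u‖ ^ 2 = 1) ∧
    ∀ J : Finset (Fin 3), J.Nonempty →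
      (ptrace (J.image Fin.castSucc)
          (outer fun f : Fin 4 → Fin (d + 1) => purif hA hB hC (f 0, f 1, f 2, f 3))).charpoly
        = X ^ ((d + 1) ^ J.card - (d + 1))
          * (X - Polynomial.C (1 - (∑ j ∈ J, ![A, B, C] j).trace))
          * (∑ j ∈ J, ![A, B, C] j).charpoly := by
  have hnorm := sum_norm_sq_purif hA hB hC ((lmaxM_nonneg ((hA.add hB).add hC)).trans hbound)
  refine ⟨hnorm, fun J hJ => ?_⟩
  have h3 : (3 : Fin 4) ∈ (J.image Fin.castSucc)ᶜ := by
    simpa [Fin.ext_iff] using fun x _ => x.isLt.ne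
  have key := charpoly_ptrace_outer (t := ⟨3, h3⟩) (isStarShaped_purif hA hB hC)
    (by rw [sum_comp_fin_four fun u => ‖purif hA hB hC u‖ ^ 2, hnorm])
  have hcard : (d + 1) + ((d + 1) ^ J.card - (d + 1)) = (d + 1) ^ J.card :=
    Nat.add_sub_cancel' (Nat.le_self_pow hJ.card_pos.ne' _)
  rw [sum_conjTranspose_starArm_mul_starArm_purif, Fintype.card_fun, Fintype.card_fin,
    Fintype.card_coe, Finset.card_image_of_injective _ (Fin.castSucc_injective 3), ← hcard,
    pow_add X (d + 1), mul_assoc] at key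
  rw [mul_assoc]
  exact mul_left_cancel₀ (pow_ne_zero _ X_ne_zero) key

open Polynomial in
theorem stmt11 (d : ℕ) (hd : 1 ≤ d)
    (A B C : Matrix (Fin d) (Fin d) ℂ)
    (hA : A.PosSemidef) (hB : B.PosSemidef) (hC : C.PosSemidef)
    (hbound : lmaxM (A + B + C) ≤ 1 - ((A + B + C).trace).re) :
    (∑ u, ‖purif hA hB hC u‖ ^ 2 = 1) ∧
    ∀ J : Finset (Fin 3), J.Nonempty →
      (ptrace (J.image Fin.castSucc)
          (outer fun f : Fin 4 → Fin (d + 1) => purif hA hB hC (f 0, f 1, f 2, f 3))).charpoly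
        = X ^ ((d + 1) ^ J.card - (d + 1))
          * (X - Polynomial.C (1 - (∑ j ∈ J, ![A, B, C] j).trace))
          * (∑ j ∈ J, ![A, B, C] j).charpoly :=
  stmt11_general d A B C hA hB hC hbound
end

section
/- Purity implies a nearby pure state with close marginal spectra: Let n ≥ 1, d : Fin n → ℕ with 1 ≤ d i for all i, and let ρ be a density matrix indexed by ((i : Fin n) → Fin (d i)). Let p ∈ ℝ with 1/2 < p and ((ρ*ρ).trace).re ≥ p. Then there exists a unit vector ψ such that (∑ u v, conj (ψ u) * ρ u v * ψ v).re ≥ p and, setting σ = |ψ⟩⟨ψ| (the matrix (u,v) ↦ ψ u * conj (ψ v)), one has ∑ k : Fin n, ∑ i : Fin (d k), |λ↓(ρ_k) i − λ↓(σ_k) i| ≤ n * (1 − Real.sqrt (2*p − 1)), where ρ_k and σ_k denote the one-body reduced density matrices at site k. -/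
open scoped BigOperators
open ComplexOrder

/-- The one-body reduced density matrix at site `k`. -/
noncomputable def red1 {n : ℕ} {d : Fin n → ℕ}
    (ρ : Matrix ((i : Fin n) → Fin (d i)) ((i : Fin n) → Fin (d i)) ℂ) (k : Fin n) :
    Matrix (Fin (d k)) (Fin (d k)) ℂ :=
  Matrix.of fun s t => ∑ x : (i : Fin n) → Fin (d i),
    if x k = s then ρ x (Function.update x k t) else 0

open Classical in
/-- The non-increasing rearrangement `λ↓` of the eigenvalues of a Hermitian matrix;
junk value `0` for non-Hermitian matrices. -/
noncomputable def eigDesc {m : ℕ} (H : Matrix (Fin m) (Fin m) ℂ) : Fin m → ℝ :=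
  if h : H.IsHermitian then fun i => h.eigenvalues (Tuple.sort (fun j => -h.eigenvalues j) i)
  else 0

/-!
Let `ψ` be a unit eigenvector for the largest eigenvalue `t` of `ρ` and `σ = |ψ⟩⟨ψ|`. Since the
eigenvalues of `ρ` are nonnegative and sum to one, `p ≤ tr ρ² ≤ min t (t² + (1 - t)²)`, which gives
`⟨ψ, ρ ψ⟩ = t ≥ p` and `2t - 1 ≥ √(2p - 1)`. Moreover `ρ - t σ ≥ 0`, and partial traces preserve
positivity, so `ρ_k ≥ t σ_k` for every site `k`. By the Courant–Fischer principle (Weyl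
monotonicity) this gives `λ↓(ρ_k) ≥ t λ↓(σ_k)` entrywise, and two probability vectors `a, b` with
`a ≥ t b` satisfy `∑ |aᵢ - bᵢ| ≤ 2(1 - t) ≤ 1 - √(2p - 1)`.
-/

open scoped InnerProductSpace
open Matrix WithLp

lemma Matrix.star_dotProduct_vecMulVec_mulVec {𝕜 ι : Type*} [RCLike 𝕜] [Fintype ι]
    (ψ x : ι → 𝕜) :
    star x ⬝ᵥ vecMulVec ψ (star ψ) *ᵥ x = ((‖star ψ ⬝ᵥ x‖ ^ 2 : ℝ) : 𝕜) := by
  rw [vecMulVec_mulVec, op_smul_eq_smul, dotProduct_smul, star_dotProduct x ψ, smul_eq_mul,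
    RCLike.star_def, RCLike.mul_conj]
  push_cast
  rfl

namespace Matrix.IsHermitian

variable {𝕜 ι : Type*} [RCLike 𝕜] [Fintype ι] [DecidableEq ι] {A : Matrix ι ι 𝕜}

lemma re_trace_mul_self (hA : A.IsHermitian) :
    RCLike.re (A * A).trace = ∑ j, hA.eigenvalues j ^ 2 := by
  conv_lhs => rw [hA.spectral_theorem]
  rw [← map_mul, Unitary.conjStarAlgAut_apply, trace_mul_cycle, Unitary.coe_star_mul_self,
    one_mul, diagonal_mul_diagonal, trace_diagonal]
  simp [sq]

lemma star_dotProduct_mulVec_eq_sum (hA : A.IsHermitian) (x : EuclideanSpace 𝕜 ι) :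
    star (ofLp x) ⬝ᵥ A *ᵥ ofLp x =
      ∑ j, ((hA.eigenvalues j * ‖⟪hA.eigenvectorBasis j, x⟫_𝕜‖ ^ 2 : ℝ) : 𝕜) := by
  rw [dotProduct_comm, ← EuclideanSpace.inner_eq_star_dotProduct x (toLp 2 (A *ᵥ ofLp x)),
    ← hA.eigenvectorBasis.sum_inner_mul_inner]
  refine Finset.sum_congr rfl fun j _ => ?_
  have hb : toEuclideanLin A (hA.eigenvectorBasis j) =
      (hA.eigenvalues j : 𝕜) • hA.eigenvectorBasis j := by
    change toLp 2 (A *ᵥ ofLp (hA.eigenvectorBasis j)) = _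
    rw [hA.mulVec_eigenvectorBasis, WithLp.toLp_smul, toLp_ofLp,
      RCLike.real_smul_eq_coe_smul (K := 𝕜)]
  rw [show toLp 2 (A *ᵥ ofLp x) = toEuclideanLin A x from rfl,
    ← isSymmetric_toEuclideanLin_iff.mpr hA, ← inner_conj_symm x, hb,
    inner_smul_left, RCLike.conj_ofReal, mul_left_comm, RCLike.conj_mul]
  push_cast
  ring

lemma mul_norm_sq_le_re_dotProduct_mulVec (hA : A.IsHermitian) {c : ℝ} {x : EuclideanSpace 𝕜 ι}
    (hx : ∀ j, hA.eigenvalues j < c → ⟪hA.eigenvectorBasis j, x⟫_𝕜 = 0) :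
    c * ‖x‖ ^ 2 ≤ RCLike.re (star (ofLp x) ⬝ᵥ A *ᵥ ofLp x) := by
  rw [hA.star_dotProduct_mulVec_eq_sum, map_sum, ← hA.eigenvectorBasis.sum_sq_norm_inner_right,
    Finset.mul_sum]
  refine Finset.sum_le_sum fun j _ => ?_
  rw [RCLike.ofReal_re]
  by_cases hj : hA.eigenvalues j < c
  · simp [hx j hj]
  · exact mul_le_mul_of_nonneg_right (not_lt.mp hj) (by positivity)

lemma re_dotProduct_mulVec_le_mul_norm_sq (hA : A.IsHermitian) {c : ℝ} {x : EuclideanSpace 𝕜 ι}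
    (hx : ∀ j, c < hA.eigenvalues j → ⟪hA.eigenvectorBasis j, x⟫_𝕜 = 0) :
    RCLike.re (star (ofLp x) ⬝ᵥ A *ᵥ ofLp x) ≤ c * ‖x‖ ^ 2 := by
  rw [hA.star_dotProduct_mulVec_eq_sum, map_sum, ← hA.eigenvectorBasis.sum_sq_norm_inner_right,
    Finset.mul_sum]
  refine Finset.sum_le_sum fun j _ => ?_
  rw [RCLike.ofReal_re]
  by_cases hj : c < hA.eigenvalues j
  · simp [hx j hj]
  · exact mul_le_mul_of_nonneg_right (not_lt.mp hj) (by positivity)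

end Matrix.IsHermitian

namespace Matrix.PosSemidef

variable {𝕜 ι : Type*} [RCLike 𝕜]

lemma isHermitian_of_sub_smul {A B : Matrix ι ι 𝕜} {c : ℝ} (h : (B - c • A).PosSemidef)
    (hA : A.IsHermitian) : B.IsHermitian := by
  simpa using h.1.add (hA.smul (IsSelfAdjoint.all c))

lemma sub_smul_vecMulVec_eigenvectorBasis [Fintype ι] [DecidableEq ι] {A : Matrix ι ι 𝕜}
    (hA : A.PosSemidef) (j : ι) :
    (A - hA.1.eigenvalues j • vecMulVec (ofLp (hA.1.eigenvectorBasis j))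
      (star (ofLp (hA.1.eigenvectorBasis j)))).PosSemidef := by
  set b := hA.1.eigenvectorBasis
  refine .of_dotProduct_mulVec_nonneg
    (hA.1.sub ((posSemidef_vecMulVec_self_star _).1.smul (IsSelfAdjoint.all _))) fun x => ?_
  have hquad : star x ⬝ᵥ A *ᵥ x = _ := hA.1.star_dotProduct_mulVec_eq_sum (toLp 2 x)
  have hcoeff : star (ofLp (b j)) ⬝ᵥ x = ⟪b j, toLp 2 x⟫_𝕜 := dotProduct_comm _ _
  rw [sub_mulVec, smul_mulVec, dotProduct_sub, dotProduct_smul, star_dotProduct_vecMulVec_mulVec,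
    hcoeff, hquad, ← Finset.add_sum_erase _ _ (Finset.mem_univ j), RCLike.real_smul_eq_coe_mul,
    ← RCLike.ofReal_mul, add_sub_cancel_left]
  exact Finset.sum_nonneg fun i _ => RCLike.ofReal_nonneg.mpr
    (mul_nonneg (hA.eigenvalues_nonneg i) (by positivity))

end Matrix.PosSemidef

lemma outer_eq_vecMulVec {ι : Type*} (ψ : ι → ℂ) : outer ψ = vecMulVec ψ (star ψ) := rfl

lemma trace_outer_ofLp {ι : Type*} [Fintype ι] (x : EuclideanSpace ℂ ι) :
    (outer (ofLp x)).trace = (‖x‖ ^ 2 : ℝ) := by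
  rw [outer_eq_vecMulVec, trace_vecMulVec, ← EuclideanSpace.inner_eq_star_dotProduct,
    inner_self_eq_norm_sq_to_K]
  push_cast
  rfl

lemma star_dotProduct_mulVec_eq_sum_sum {ι : Type*} [Fintype ι] (M : Matrix ι ι ℂ) (ψ : ι → ℂ) :
    star ψ ⬝ᵥ M *ᵥ ψ = ∑ u, ∑ v, (starRingEnd ℂ) (ψ u) * M u v * ψ v := by
  simp [dotProduct, mulVec, Finset.mul_sum, mul_assoc]

lemma exists_ne_zero_forall_inner_eq_zero {𝕜 E κ : Type*} [RCLike 𝕜] [NormedAddCommGroup E]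
    [InnerProductSpace 𝕜 E] [FiniteDimensional 𝕜 E] [Fintype κ] (v : κ → E)
    (hcard : Fintype.card κ < Module.finrank 𝕜 E) : ∃ x ≠ 0, ∀ k, ⟪v k, x⟫_𝕜 = 0 := by
  set K := Submodule.span 𝕜 (Set.range v)
  have hK : K ≠ ⊤ := fun hK => by
    have : Module.finrank 𝕜 K ≤ Fintype.card κ := finrank_range_le_card v
    rw [hK, finrank_top] at this
    omega
  obtain ⟨x, hxK, hx⟩ := Submodule.exists_mem_ne_zero_of_ne_bot
    (mt Submodule.orthogonal_eq_bot_iff.mp hK)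
  exact ⟨x, hx, fun k => Submodule.inner_right_of_mem_orthogonal
    (Submodule.subset_span (Set.mem_range_self k)) hxK⟩

section eigDesc

variable {m : ℕ} {H : Matrix (Fin m) (Fin m) ℂ}

lemma eigDesc_eq (hH : H.IsHermitian) :
    eigDesc H = hH.eigenvalues ∘ Tuple.sort (fun j => -hH.eigenvalues j) := by
  rw [eigDesc, dif_pos hH]
  rfl

lemma sum_eigDesc (hH : H.IsHermitian) : ∑ i, eigDesc H i = H.trace.re := by
  rw [eigDesc_eq hH, hH.trace_eq_sum_eigenvalues, Complex.re_sum]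
  simpa using Equiv.sum_comp (Tuple.sort fun j => -hH.eigenvalues j) hH.eigenvalues

lemma eigDesc_nonneg (hH : H.PosSemidef) (i : Fin m) : 0 ≤ eigDesc H i := by
  rw [eigDesc_eq hH.1]
  exact hH.eigenvalues_nonneg _

lemma card_eigenvalues_lt_eigDesc (hH : H.IsHermitian) (i : Fin m) :
    Fintype.card {j // hH.eigenvalues j < eigDesc H i} ≤ m - 1 - i := by
  set τ := Tuple.sort fun j => -hH.eigenvalues j
  have hτ := Tuple.monotone_sort fun j => -hH.eigenvalues j
  calc Fintype.card {j // hH.eigenvalues j < eigDesc H i}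
      = Fintype.card {l // hH.eigenvalues (τ l) < eigDesc H i} :=
        Fintype.card_congr (τ.subtypeEquiv fun _ => Iff.rfl).symm
    _ ≤ Fintype.card {l // i < l} := Fintype.card_subtype_mono _ _ fun l hl => by
        by_contra! hli
        have := hτ hli
        simp only [Function.comp_apply, neg_le_neg_iff, eigDesc_eq hH] at this hl
        linarith
    _ = m - 1 - i := by rw [Fintype.card_subtype, Finset.filter_lt_eq_Ioi, Fin.card_Ioi]

lemma card_eigDesc_lt_eigenvalues (hH : H.IsHermitian) (i : Fin m) :
    Fintype.card {j // eigDesc H i < hH.eigenvalues j} ≤ i := by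
  set τ := Tuple.sort fun j => -hH.eigenvalues j
  have hτ := Tuple.monotone_sort fun j => -hH.eigenvalues j
  calc Fintype.card {j // eigDesc H i < hH.eigenvalues j}
      = Fintype.card {l // eigDesc H i < hH.eigenvalues (τ l)} :=
        Fintype.card_congr (τ.subtypeEquiv fun _ => Iff.rfl).symm
    _ ≤ Fintype.card {l // l < i} := Fintype.card_subtype_mono _ _ fun l hl => by
        by_contra! hli
        have := hτ hli
        simp only [Function.comp_apply, neg_le_neg_iff, eigDesc_eq hH] at this hl
        linarith
    _ = i := by rw [Fintype.card_subtype, Finset.filter_gt_eq_Iio, Fin.card_Iio]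

/-- Weyl monotonicity. The test vector `x` is orthogonal to the eigenvectors of `A` below
`λ↓(A) i` and to those of `B` above `λ↓(B) i`; there are fewer than `m` of them. -/
lemma mul_eigDesc_le_eigDesc {A B : Matrix (Fin m) (Fin m) ℂ} (hA : A.IsHermitian) {c : ℝ}
    (hc : 0 ≤ c) (hAB : (B - c • A).PosSemidef) (i : Fin m) :
    c * eigDesc A i ≤ eigDesc B i := by
  have hB := hAB.isHermitian_of_sub_smul hA
  obtain ⟨x, hx0, hx⟩ := exists_ne_zero_forall_inner_eq_zero (𝕜 := ℂ)
    (Sum.elim (fun j : {j // hA.eigenvalues j < eigDesc A i} => hA.eigenvectorBasis j)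
      (fun j : {j // eigDesc B i < hB.eigenvalues j} => hB.eigenvectorBasis j)) (by
        have := card_eigenvalues_lt_eigDesc hA i
        have := card_eigDesc_lt_eigenvalues hB i
        rw [Fintype.card_sum, finrank_euclideanSpace_fin]
        omega)
  have hA_ge := hA.mul_norm_sq_le_re_dotProduct_mulVec fun j hj => hx (.inl ⟨j, hj⟩)
  have hB_le := hB.re_dotProduct_mulVec_le_mul_norm_sq fun j hj => hx (.inr ⟨j, hj⟩)
  have hAB_re := hAB.re_dotProduct_nonneg (ofLp x)
  rw [sub_mulVec, smul_mulVec, dotProduct_sub, dotProduct_smul, map_sub, RCLike.smul_re] at hAB_re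
  have hx_pos : 0 < ‖x‖ ^ 2 := by positivity
  refine le_of_mul_le_mul_right ?_ hx_pos
  calc c * eigDesc A i * ‖x‖ ^ 2 ≤ c * RCLike.re (star (ofLp x) ⬝ᵥ A *ᵥ ofLp x) := by
        rw [mul_assoc]; exact mul_le_mul_of_nonneg_left hA_ge hc
    _ ≤ RCLike.re (star (ofLp x) ⬝ᵥ B *ᵥ ofLp x) := by linarith
    _ ≤ eigDesc B i * ‖x‖ ^ 2 := hB_le

end eigDesc

section red1

variable {n : ℕ} {d : Fin n → ℕ}

lemma update_piSplitAt_symm (k : Fin n) (s t : Fin (d k)) (g : (j : {j // j ≠ k}) → Fin (d j)) :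
    Function.update ((Equiv.piSplitAt k _).symm (s, g)) k t =
      (Equiv.piSplitAt k (fun i => Fin (d i))).symm (t, g) := by
  ext j
  by_cases hj : j = k
  · subst hj; simp
  · simp [hj]

lemma red1_eq_sum_submatrix (M : Matrix ((i : Fin n) → Fin (d i)) ((i : Fin n) → Fin (d i)) ℂ)
    (k : Fin n) :
    red1 M k = ∑ g, M.submatrix (fun s => (Equiv.piSplitAt k _).symm (s, g))
      (fun s => (Equiv.piSplitAt k _).symm (s, g)) := by
  ext s t
  rw [red1, of_apply, ← (Equiv.piSplitAt k _).symm.sum_comp, Fintype.sum_prod_type,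
    Finset.sum_comm, Matrix.sum_apply]
  simp [update_piSplitAt_symm]

lemma Matrix.PosSemidef.red1
    {M : Matrix ((i : Fin n) → Fin (d i)) ((i : Fin n) → Fin (d i)) ℂ} (hM : M.PosSemidef)
    (k : Fin n) : (red1 M k).PosSemidef := by
  rw [red1_eq_sum_submatrix]
  exact posSemidef_sum _ fun g _ => hM.submatrix _

lemma trace_red1 (M : Matrix ((i : Fin n) → Fin (d i)) ((i : Fin n) → Fin (d i)) ℂ) (k : Fin n) :
    (red1 M k).trace = M.trace := by
  rw [red1_eq_sum_submatrix, trace_sum]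
  simp only [trace, diag_apply, submatrix_apply]
  rw [Finset.sum_comm, ← Fintype.sum_prod_type']
  exact (Equiv.piSplitAt k _).symm.sum_comp fun x => M x x

lemma red1_sub_smul (A B : Matrix ((i : Fin n) → Fin (d i)) ((i : Fin n) → Fin (d i)) ℂ) (c : ℝ)
    (k : Fin n) : red1 (A - c • B) k = red1 A k - c • red1 B k := by
  simp only [red1_eq_sum_submatrix, Finset.smul_sum, ← Finset.sum_sub_distrib]
  rfl

end red1

section Probability

variable {ι : Type*} [Fintype ι] {μ : ι → ℝ}

lemma sum_sq_le_of_forall_le (hμ : ∀ j, 0 ≤ μ j) (hsum : ∑ j, μ j = 1) {i : ι}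
    (hmax : ∀ j, μ j ≤ μ i) : ∑ j, μ j ^ 2 ≤ μ i := by
  calc ∑ j, μ j ^ 2 ≤ ∑ j, μ i * μ j :=
        Finset.sum_le_sum fun j _ => by rw [sq]; exact mul_le_mul_of_nonneg_right (hmax j) (hμ j)
    _ = μ i := by rw [← Finset.mul_sum, hsum, mul_one]

lemma sum_sq_le_sq_add_one_sub_sq [DecidableEq ι] (hμ : ∀ j, 0 ≤ μ j) (hsum : ∑ j, μ j = 1)
    (i : ι) : ∑ j, μ j ^ 2 ≤ μ i ^ 2 + (1 - μ i) ^ 2 := by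
  have hrest : ∑ j ∈ Finset.univ.erase i, μ j = 1 - μ i := by
    rw [← hsum, ← Finset.add_sum_erase _ _ (Finset.mem_univ i), add_sub_cancel_left]
  rw [← Finset.add_sum_erase _ _ (Finset.mem_univ i), sq (1 - μ i)]
  gcongr
  calc ∑ j ∈ Finset.univ.erase i, μ j ^ 2 ≤ ∑ j ∈ Finset.univ.erase i, (1 - μ i) * μ j :=
        Finset.sum_le_sum fun j hj => by
          rw [sq, ← hrest]
          exact mul_le_mul_of_nonneg_right (Finset.single_le_sum (fun j _ => hμ j) hj) (hμ j)
    _ = (1 - μ i) * (1 - μ i) := by rw [← Finset.mul_sum, hrest]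

lemma sqrt_two_mul_sub_one_le_of_le_sum_sq [DecidableEq ι] (hμ : ∀ j, 0 ≤ μ j)
    (hsum : ∑ j, μ j = 1) {i : ι} (hmax : ∀ j, μ j ≤ μ i) {p : ℝ} (hp : 1 / 2 < p)
    (hpur : p ≤ ∑ j, μ j ^ 2) : √(2 * p - 1) ≤ 2 * μ i - 1 :=
  Real.sqrt_le_iff.mpr ⟨by linarith [hpur.trans (sum_sq_le_of_forall_le hμ hsum hmax)],
    by nlinarith [sum_sq_le_sq_add_one_sub_sq hμ hsum i]⟩

lemma sum_abs_sub_le_of_mul_le {a b : ι → ℝ} {t : ℝ} (hb : ∀ i, 0 ≤ b i)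
    (hab : ∀ i, t * b i ≤ a i) (ha₁ : ∑ i, a i = 1) (hb₁ : ∑ i, b i = 1) :
    ∑ i, |a i - b i| ≤ 2 * (1 - t) := by
  have ht : t ≤ 1 := by
    simpa [← Finset.mul_sum, hb₁, ha₁] using Finset.sum_le_sum fun i (_ : i ∈ Finset.univ) => hab i
  calc ∑ i, |a i - b i| ≤ ∑ i, (a i + b i - 2 * t * b i) :=
        Finset.sum_le_sum fun i _ => abs_sub_le_iff.mpr
          ⟨by nlinarith [hb i, hab i], by nlinarith [hb i, hab i]⟩
    _ = 2 * (1 - t) := by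
        rw [Finset.sum_sub_distrib, Finset.sum_add_distrib, ← Finset.mul_sum, ha₁, hb₁]
        ring

end Probability

lemma sum_abs_eigDesc_red1_sub_le {n : ℕ} {d : Fin n → ℕ}
    {ρ σ : Matrix ((i : Fin n) → Fin (d i)) ((i : Fin n) → Fin (d i)) ℂ} {t : ℝ}
    (ht₀ : 0 ≤ t) (hσ : σ.PosSemidef) (hρσ : (ρ - t • σ).PosSemidef)
    (hρ₁ : ρ.trace = 1) (hσ₁ : σ.trace = 1) (k : Fin n) :
    ∑ i, |eigDesc (red1 ρ k) i - eigDesc (red1 σ k) i| ≤ 2 * (1 - t) := by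
  have hσk := hσ.red1 k
  have hρσk : (red1 ρ k - t • red1 σ k).PosSemidef := red1_sub_smul ρ σ t k ▸ hρσ.red1 k
  refine sum_abs_sub_le_of_mul_le (eigDesc_nonneg hσk)
    (mul_eigDesc_le_eigDesc hσk.1 ht₀ hρσk) ?_ ?_
  · rw [sum_eigDesc (hρσk.isHermitian_of_sub_smul hσk.1), trace_red1, hρ₁, Complex.one_re]
  · rw [sum_eigDesc hσk.1, trace_red1, hσ₁, Complex.one_re]

theorem stmt13_general (n : ℕ) (d : Fin n → ℕ)
    (ρ : Matrix ((i : Fin n) → Fin (d i)) ((i : Fin n) → Fin (d i)) ℂ)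
    (hρ : ρ.PosSemidef) (htr : ρ.trace = 1)
    (p : ℝ) (hp : 1 / 2 < p) (hpur : p ≤ ((ρ * ρ).trace).re) :
    ∃ ψ : ((i : Fin n) → Fin (d i)) → ℂ,
      (∑ u, ‖ψ u‖ ^ 2 = 1) ∧
      p ≤ (∑ u, ∑ v, (starRingEnd ℂ) (ψ u) * ρ u v * ψ v).re ∧
      ∑ k : Fin n, ∑ i : Fin (d k),
          |eigDesc (red1 ρ k) i - eigDesc (red1 (outer ψ) k) i|
        ≤ (n : ℝ) * (1 - Real.sqrt (2 * p - 1)) := by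
  have hH := hρ.1
  have : Nonempty ((i : Fin n) → Fin (d i)) := by
    by_contra h
    simp [not_nonempty_iff.mp h, trace] at htr
  obtain ⟨j₀, hmax⟩ := Finite.exists_max hH.eigenvalues
  set t := hH.eigenvalues j₀
  set b := hH.eigenvectorBasis j₀
  have hsum : ∑ j, hH.eigenvalues j = 1 := by
    simpa [hH.trace_eq_sum_eigenvalues] using congrArg Complex.re htr
  have hpur' : p ≤ ∑ j, hH.eigenvalues j ^ 2 := hH.re_trace_mul_self ▸ hpur
  have hpt : p ≤ t := hpur'.trans (sum_sq_le_of_forall_le hρ.eigenvalues_nonneg hsum hmax)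
  have hsqrt := sqrt_two_mul_sub_one_le_of_le_sum_sq hρ.eigenvalues_nonneg hsum hmax hp hpur'
  have hb : ‖b‖ = 1 := hH.eigenvectorBasis.orthonormal.1 j₀
  refine ⟨ofLp b, by rw [← EuclideanSpace.norm_sq_eq, hb, one_pow], ?_, ?_⟩
  · rw [← star_dotProduct_mulVec_eq_sum_sum]
    exact hpt.trans_eq (hH.eigenvalues_eq j₀)
  · have hsite := sum_abs_eigDesc_red1_sub_le (by linarith)
      (outer_eq_vecMulVec _ ▸ posSemidef_vecMulVec_self_star _)
      (outer_eq_vecMulVec _ ▸ hρ.sub_smul_vecMulVec_eigenvectorBasis j₀) htr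
      (by rw [trace_outer_ofLp, hb]; simp)
    calc _ ≤ ∑ _k : Fin n, 2 * (1 - t) := Finset.sum_le_sum fun k _ => hsite k
      _ ≤ n * (1 - √(2 * p - 1)) := by
        rw [Finset.sum_const, Finset.card_univ, Fintype.card_fin, nsmul_eq_mul]
        gcongr
        linarith

theorem stmt13 (n : ℕ) (hn : 1 ≤ n) (d : Fin n → ℕ) (hd : ∀ i, 1 ≤ d i)
    (ρ : Matrix ((i : Fin n) → Fin (d i)) ((i : Fin n) → Fin (d i)) ℂ)
    (hρ : ρ.PosSemidef) (htr : ρ.trace = 1)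
    (p : ℝ) (hp : 1 / 2 < p) (hpur : p ≤ ((ρ * ρ).trace).re) :
    ∃ ψ : ((i : Fin n) → Fin (d i)) → ℂ,
      (∑ u, ‖ψ u‖ ^ 2 = 1) ∧
      p ≤ (∑ u, ∑ v, (starRingEnd ℂ) (ψ u) * ρ u v * ψ v).re ∧
      ∑ k : Fin n, ∑ i : Fin (d k),
          |eigDesc (red1 ρ k) i - eigDesc (red1 (outer ψ) k) i|
        ≤ (n : ℝ) * (1 - Real.sqrt (2 * p - 1)) :=
  stmt13_general n d ρ hρ htr p hp hpur
end

section
/- Existence of pure states with all one-body marginals non-degenerate: Let n ≥ 1 and let d : Fin (n+1) → ℕ be monotone with 1 ≤ d i for all i. Then the following are equivalent: (i) there exists a unit vector ψ : ((i : Fin (n+1)) → Fin (d i)) → ℂ such that for every i : Fin (n+1) the one-body reduced density matrix ρ_i of |ψ⟩⟨ψ| (the partial trace over all factors other than the i-th) has pairwise distinct eigenvalues, i.e. the map ρ_i.isHermitian.eigenvalues : Fin (d i) → ℝ is injective; (ii) d (Fin.last n) ≤ (∏ k : Fin n, d k.castSucc) + 1. -/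
/-!
If `A` is `ψ` reshaped into a `d_last × ∏_{k < last} d_k` matrix, then `ρ_last = A Aᴴ` has rank
at most `∏ d_k`, while pairwise distinct eigenvalues allow at most one of them to vanish.

Conversely, take codewords `x₀, …, x_{m-1}` in `∏ᵢ Fin (dᵢ)`, any two of which differ in at
least two sites, and whose letters at each site miss at most one value, and put
`ψ = ∑ⱼ √wⱼ |xⱼ⟩` with `wⱼ ∝ 2ʲ`. Distance two makes each `ρᵢ` diagonal, its entry at `s`
being the weight of the codewords with `i`-th letter `s`; these fibres are disjoint and at most
one is empty, so binary weights make the entries distinct. Such a code exists for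
`m = min d_last (∏ d_k)`: let the last letter of `xⱼ` be `j` and choose the other letters
injectively, hitting the diagonal `(j mod d_k)_k`; this needs `d_k ≤ m + 1`, which is where
monotonicity of `d` enters.
-/

open scoped BigOperators
open ComplexOrder

open Finset Matrix

section Spectrum

variable {𝕜 ι : Type*} [RCLike 𝕜] [Fintype ι] [DecidableEq ι] {A : Matrix ι ι 𝕜}

theorem Matrix.IsHermitian.injective_eigenvalues_iff_nodup_roots_charpoly
    (hA : A.IsHermitian) : Function.Injective hA.eigenvalues ↔ A.charpoly.roots.Nodup := by
  rw [hA.roots_charpoly_eq_eigenvalues, Multiset.nodup_map_iff_inj_on univ.nodup]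
  simp [Function.Injective]

theorem Matrix.IsHermitian.injective_eigenvalues_of_eq_diagonal (hA : A.IsHermitian)
    {μ : ι → ℝ} (hμ : Function.Injective μ) (h : A = diagonal fun i => (μ i : 𝕜)) :
    Function.Injective hA.eigenvalues := by
  rw [hA.injective_eigenvalues_iff_nodup_roots_charpoly, h, charpoly_diagonal,
    Polynomial.roots_prod _ _ (by simp [prod_ne_zero_iff, Polynomial.X_sub_C_ne_zero])]
  simpa [Multiset.nodup_map_iff_of_injective] using
    (Multiset.nodup_map_iff_of_injective (RCLike.ofReal_injective.comp hμ)).2 univ.nodup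

theorem Matrix.IsHermitian.card_le_rank_add_one (hA : A.IsHermitian)
    (h : Function.Injective hA.eigenvalues) : Fintype.card ι ≤ A.rank + 1 := by
  have hzero : Fintype.card {i // hA.eigenvalues i = 0} ≤ 1 :=
    Fintype.card_le_one_iff.mpr fun a b => Subtype.ext (h (a.2.trans b.2.symm))
  rw [hA.rank_eq_card_non_zero_eigs, Fintype.card_subtype_compl]
  have := Fintype.card_subtype_le fun i => hA.eigenvalues i = 0
  omega

end Spectrum

section Forward

variable {n : ℕ} {d : Fin (n + 1) → ℕ}

def matricizeLast (ψ : ((i : Fin (n + 1)) → Fin (d i)) → ℂ) :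
    Matrix (Fin (d (Fin.last n))) ((k : Fin n) → Fin (d k.castSucc)) ℂ :=
  Matrix.of fun s y => ψ (Fin.snoc y s)

theorem red1_outer_last (ψ : ((i : Fin (n + 1)) → Fin (d i)) → ℂ) :
    red1 (outer ψ) (Fin.last n) = matricizeLast ψ * (matricizeLast ψ)ᴴ := by
  ext s t
  simp only [red1, outer, matricizeLast, Matrix.of_apply, Matrix.mul_apply,
    Matrix.conjTranspose_apply]
  rw [← (Fin.snocEquiv fun i => Fin (d i)).sum_comp, Fintype.sum_prod_type, sum_comm]
  refine sum_congr rfl fun y _ => ?_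
  simp [Fin.snocEquiv, Fin.update_snoc_last]

theorem le_prod_add_one_of_injective_eigenvalues (ψ : ((i : Fin (n + 1)) → Fin (d i)) → ℂ)
    (hinj : ∀ h : (red1 (outer ψ) (Fin.last n)).IsHermitian, Function.Injective h.eigenvalues) :
    d (Fin.last n) ≤ (∏ k : Fin n, d k.castSucc) + 1 := by
  have hH : (red1 (outer ψ) (Fin.last n)).IsHermitian := by
    rw [red1_outer_last]
    exact isHermitian_mul_conjTranspose_self _
  calc d (Fin.last n) ≤ (red1 (outer ψ) (Fin.last n)).rank + 1 := by
        simpa using hH.card_le_rank_add_one (hinj hH)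
    _ ≤ (matricizeLast ψ).rank + 1 := by
        rw [red1_outer_last]
        gcongr
        exact rank_mul_le_left _ _
    _ ≤ (∏ k : Fin n, d k.castSucc) + 1 := by
        gcongr
        simpa [Fintype.card_pi] using rank_le_card_width (matricizeLast ψ)

end Forward

section Codes

variable {ι J : Type*} {α : ι → Type*}

def PairwiseDifferInTwoSites (x : J → (i : ι) → α i) : Prop :=
  ∀ i j j', (∀ k, k ≠ i → x j k = x j' k) → j = j'

def MissesAtMostOneValue (x : J → (i : ι) → α i) : Prop :=
  ∀ i, (Set.range fun j => x j i)ᶜ.Subsingleton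

theorem PairwiseDifferInTwoSites.injective {x : J → (i : ι) → α i}
    (hx : PairwiseDifferInTwoSites x) (i : ι) : Function.Injective x :=
  fun _ _ h => hx i _ _ fun k _ => congrFun h k

theorem subsingleton_setOf_le_of_le_add_one {N m : ℕ} (h : N ≤ m + 1) :
    {v : Fin N | m ≤ v}.Subsingleton := fun v hv w hw => by
  have := v.isLt; have := w.isLt
  simp only [Set.mem_ofPred_eq] at hv hw
  omega

theorem exists_injective_missesAtMostOneValue {κ : Type*} [Fintype κ] (d : κ → ℕ)
    (hd : ∀ k, 1 ≤ d k) {m : ℕ} (hmP : m ≤ ∏ k, d k) (hdm : ∀ k, d k ≤ m + 1) :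
    ∃ F : Fin m → (k : κ) → Fin (d k), Function.Injective F ∧ MissesAtMostOneValue F := by
  classical
  let g : Fin m → (k : κ) → Fin (d k) := fun j k => ⟨j % d k, Nat.mod_lt _ (hd k)⟩
  -- any `m` points containing the "diagonal" `g` hit every value below `m` in every coordinate
  obtain ⟨S, hgS, -, hS⟩ := exists_subsuperset_card_eq (subset_univ (univ.image g))
    (card_image_le.trans_eq (card_fin m)) (by simpa [Fintype.card_pi] using hmP)
  let e := S.equivFinOfCardEq hS
  refine ⟨fun j => e.symm j, Subtype.val_injective.comp e.symm.injective, fun k => ?_⟩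
  refine (subsingleton_setOf_le_of_le_add_one (hdm k)).anti fun v hv => ?_
  by_contra hvm
  refine hv ⟨e ⟨g ⟨v, by simpa using hvm⟩, hgS (mem_image_of_mem _ (mem_univ _))⟩, ?_⟩
  simp [g, Nat.mod_eq_of_lt v.isLt]

end Codes

theorem exists_code_of_le_prod_add_one {n : ℕ} (d : Fin (n + 1) → ℕ) (hmono : Monotone d)
    (hd : ∀ i, 1 ≤ d i)
    (hP : d (Fin.last n) ≤ (∏ k : Fin n, d k.castSucc) + 1) :
    ∃ m, 1 ≤ m ∧ ∃ x : Fin m → (i : Fin (n + 1)) → Fin (d i),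
      PairwiseDifferInTwoSites x ∧ MissesAtMostOneValue x := by
  set P := ∏ k : Fin n, d k.castSucc
  set m := min (d (Fin.last n)) P
  have hmL : m ≤ d (Fin.last n) := min_le_left _ _
  have hdk : ∀ k : Fin n, d k.castSucc ≤ m + 1 := fun k =>
    (le_min (hmono (Fin.castSucc_lt_last k).le)
      (single_le_prod' (f := fun k : Fin n => d k.castSucc) (fun k _ => hd _) (mem_univ k))).trans
      m.le_succ
  obtain ⟨F, hF, hFcov⟩ :=
    exists_injective_missesAtMostOneValue (fun k : Fin n => d k.castSucc) (fun k => hd _)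
      (min_le_right _ _) hdk
  let x : Fin m → (i : Fin (n + 1)) → Fin (d i) := fun j => Fin.snoc (F j) (Fin.castLE hmL j)
  refine ⟨m, le_min (hd _) (one_le_prod' fun k _ => hd _), x, ?_, ?_⟩
  · intro i j j' hjj
    refine Fin.lastCases (fun hjj => hF (funext fun k => ?_)) (fun k hjj => ?_) i hjj
    · simpa [x] using hjj k.castSucc (Fin.castSucc_lt_last k).ne
    · simpa [x] using hjj (Fin.last n) (Fin.castSucc_lt_last k).ne'
  · refine Fin.lastCases ?_ (fun k => ?_)
    · refine (subsingleton_setOf_le_of_le_add_one (m := m) (by omega)).anti fun v hv => ?_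
      by_contra hvm
      exact hv ⟨⟨v, not_le.mp hvm⟩, by simp [x]⟩
    · simpa [x] using hFcov k

section CodeState

variable {n : ℕ} {d : Fin n → ℕ} {J : Type*} {x : J → (i : Fin n) → Fin (d i)} {w : J → ℝ}

noncomputable def codeState (x : J → (i : Fin n) → Fin (d i)) (w : J → ℝ) :
    ((i : Fin n) → Fin (d i)) → ℂ :=
  Function.extend x (fun j => (w j : ℂ)) 0

theorem codeState_apply (hx : Function.Injective x) (j : J) : codeState x w (x j) = w j :=
  hx.extend_apply _ _ _

theorem codeState_apply_of_notMem_range {u : (i : Fin n) → Fin (d i)} (hu : u ∉ Set.range x) :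
    codeState x w u = 0 :=
  Function.extend_apply' _ _ _ hu

theorem codeState_apply_update (hx : PairwiseDifferInTwoSites x) (j : J) (i : Fin n)
    (t : Fin (d i)) :
    codeState x w (Function.update (x j) i t) = if x j i = t then (w j : ℂ) else 0 := by
  split_ifs with h
  · rw [← h, Function.update_eq_self, codeState_apply (hx.injective i)]
  · refine codeState_apply_of_notMem_range fun ⟨j', hj'⟩ => h ?_
    obtain rfl : j' = j := hx i j' j fun k hk => by rw [hj', Function.update_of_ne hk]
    simpa using congrFun hj' i

variable [Fintype J]

theorem sum_norm_sq_codeState (hx : Function.Injective x) :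
    ∑ u, ‖codeState x w u‖ ^ 2 = ∑ j, w j ^ 2 := by
  refine (Fintype.sum_of_injective x hx _ _ (fun u hu => ?_) fun j => ?_).symm
  · simp [codeState_apply_of_notMem_range hu]
  · simp [codeState_apply hx]

theorem red1_outer_codeState (hx : PairwiseDifferInTwoSites x) (i : Fin n) :
    red1 (outer (codeState x w)) i
      = Matrix.diagonal fun s => ((∑ j ∈ univ.filter (x · i = s), w j ^ 2 : ℝ) : ℂ) := by
  ext s t
  simp only [red1, outer, Matrix.of_apply]
  rw [← Fintype.sum_of_injective x (hx.injective i) (fun j => if x j i = s then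
      codeState x w (x j) * (starRingEnd ℂ) (codeState x w (Function.update (x j) i t)) else 0)
      _ (fun u hu => by simp [codeState_apply_of_notMem_range hu]) fun j => rfl]
  simp only [codeState_apply_update hx, codeState_apply (hx.injective i)]
  rw [Matrix.diagonal_apply]
  split_ifs with hst
  · subst hst
    rw [sum_filter]
    push_cast
    refine sum_congr rfl fun j _ => ?_
    split_ifs <;> simp [sq]
  · refine sum_eq_zero fun j _ => ?_
    split_ifs with hs ht
    · exact absurd (hs.symm.trans ht) hst
    all_goals simp

end CodeState

theorem sum_filter_two_pow_injective {β : Type*} [DecidableEq β] {m : ℕ} (f : Fin m → β)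
    (hf : (Set.range f)ᶜ.Subsingleton) :
    Function.Injective fun b => ∑ j ∈ univ.filter (f · = b), (2 : ℝ) ^ (j : ℕ) := by
  have key : ∀ j b', ∑ j' ∈ univ.filter (f · = f j), (2 : ℝ) ^ (j' : ℕ)
      = ∑ j' ∈ univ.filter (f · = b'), (2 : ℝ) ^ (j' : ℕ) → f j = b' := by
    intro j b' h
    have hsum : ∑ k ∈ (univ.filter (f · = f j)).map Fin.valEmbedding, 2 ^ k
        = ∑ k ∈ (univ.filter (f · = b')).map Fin.valEmbedding, 2 ^ k := by
      simp only [sum_map]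
      exact_mod_cast h
    have hfib := map_injective _ (geomSum_injective le_rfl hsum)
    simpa using (hfib ▸ mem_filter.2 ⟨mem_univ j, rfl⟩ : j ∈ univ.filter (f · = b'))
  intro b b' h
  by_cases hb : b ∈ Set.range f
  · obtain ⟨j, rfl⟩ := hb
    exact key j b' h
  by_cases hb' : b' ∈ Set.range f
  · obtain ⟨j, rfl⟩ := hb'
    exact (key j b h.symm).symm
  exact hf hb hb'

theorem exists_state_of_code {n m : ℕ} [NeZero n] {d : Fin n → ℕ} (hm : 1 ≤ m)
    {x : Fin m → (i : Fin n) → Fin (d i)} (hx : PairwiseDifferInTwoSites x)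
    (hcov : MissesAtMostOneValue x) :
    ∃ ψ : ((i : Fin n) → Fin (d i)) → ℂ, (∑ u, ‖ψ u‖ ^ 2 = 1) ∧
      ∀ i, ∀ h : (red1 (outer ψ) i).IsHermitian, Function.Injective h.eigenvalues := by
  have hN : (0 : ℝ) < 2 ^ m - 1 := by
    have : (1 : ℝ) < 2 ^ m := one_lt_pow₀ one_lt_two (by omega)
    linarith
  let w : Fin m → ℝ := fun j => √(2 ^ (j : ℕ) / (2 ^ m - 1))
  have hw : ∀ j, w j ^ 2 = 2 ^ (j : ℕ) / (2 ^ m - 1) := fun j => Real.sq_sqrt (by positivity)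
  have hμ : ∀ i, Function.Injective fun s : Fin (d i) =>
      ∑ j ∈ univ.filter (x · i = s), w j ^ 2 := by
    intro i
    simp_rw [hw, ← sum_div]
    exact fun s s' h => sum_filter_two_pow_injective _ (hcov i) ((div_left_inj' hN.ne').mp h)
  refine ⟨codeState x w, ?_, fun i h =>
    h.injective_eigenvalues_of_eq_diagonal (hμ i) (red1_outer_codeState hx i)⟩
  rw [sum_norm_sq_codeState (hx.injective 0)]
  simp_rw [hw]
  rw [← sum_div, Fin.sum_univ_eq_sum_range (fun j => (2 : ℝ) ^ j),
    geom_sum_eq one_lt_two.ne' m]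
  norm_num [hN.ne']

theorem stmt15_general (n : ℕ) (d : Fin (n + 1) → ℕ)
    (hmono : Monotone d) (hd : ∀ i, 1 ≤ d i) :
    (∃ ψ : ((i : Fin (n + 1)) → Fin (d i)) → ℂ,
        (∑ u, ‖ψ u‖ ^ 2 = 1) ∧
        ∀ i : Fin (n + 1), ∀ h : (red1 (outer ψ) i).IsHermitian,
          Function.Injective h.eigenvalues) ↔
      d (Fin.last n) ≤ (∏ k : Fin n, d k.castSucc) + 1 := by
  constructor
  · rintro ⟨ψ, -, hinj⟩
    exact le_prod_add_one_of_injective_eigenvalues ψ (hinj _)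
  · intro hP
    obtain ⟨m, hm, x, hx, hcov⟩ := exists_code_of_le_prod_add_one d hmono hd hP
    exact exists_state_of_code hm hx hcov

theorem stmt15 (n : ℕ) (hn : 1 ≤ n) (d : Fin (n + 1) → ℕ)
    (hmono : Monotone d) (hd : ∀ i, 1 ≤ d i) :
    (∃ ψ : ((i : Fin (n + 1)) → Fin (d i)) → ℂ,
        (∑ u, ‖ψ u‖ ^ 2 = 1) ∧
        ∀ i : Fin (n + 1), ∀ h : (red1 (outer ψ) i).IsHermitian,
          Function.Injective h.eigenvalues) ↔
      d (Fin.last n) ≤ (∏ k : Fin n, d k.castSucc) + 1 :=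
  stmt15_general n d hmono hd
end
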